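/- arXiv:2407.10635 — 5 statements merged into one kernel-verified Lean document; each statement's English description precedes it below -/
import Mathlib

section
/- Let Φ₁, Φ₂ : Mₙ(ℂ) → Mₙ(ℂ) be completely positive, trace-preserving, unital linear maps, and let X, Y ∈ Mₙ(ℂ) be matrices such that Φ₁(X) = Y and Φ₂(Y) = X. Then Φ₁(XW) = Y·Φ₁(W) for all W ∈ Mₙ(ℂ). -/
open Matrix ComplexOrder

/-- A linear map `Φ : Mₙ(ℂ) → Mₘ(ℂ)` is completely positive if for every `l`,
`id_{M_l} ⊗ Φ` maps positive semidefinite matrices to positive semidefinite matrices. -/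
def IsCompletelyPositive {n m : Type*} [Fintype n] [Fintype m]
    (Φ : Matrix n n ℂ →ₗ[ℂ] Matrix m m ℂ) : Prop :=
  ∀ (l : ℕ) (M : Matrix (Fin l × n) (Fin l × n) ℂ), M.PosSemidef →
    (Matrix.of fun p q : Fin l × m =>
      Φ (Matrix.of fun x y => M (p.1, x) (q.1, y)) p.2 q.2).PosSemidef

def sumProdEquiv (n : ℕ) : (Fin n ⊕ Fin n) ≃ (Fin 2 × Fin n) where
  toFun x := Sum.elim (fun i => ((0 : Fin 2), i)) (fun i => ((1 : Fin 2), i)) x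
  invFun p := if p.1 = 0 then Sum.inl p.2 else Sum.inr p.2
  left_inv := by rintro (i | i) <;> simp
  right_inv := by rintro ⟨a, i⟩; fin_cases a <;> simp

lemma cp_fromBlocks {n : ℕ} {Φ : Matrix (Fin n) (Fin n) ℂ →ₗ[ℂ] Matrix (Fin n) (Fin n) ℂ}
    (hcp : IsCompletelyPositive Φ) (A B C D : Matrix (Fin n) (Fin n) ℂ)
    (h : (fromBlocks A B C D).PosSemidef) :
    (fromBlocks (Φ A) (Φ B) (Φ C) (Φ D)).PosSemidef := by
  set e := sumProdEquiv n
  have hM : ((fromBlocks A B C D).submatrix e.symm e.symm).PosSemidef := h.submatrix _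
  have hN := hcp 2 _ hM
  have key : fromBlocks (Φ A) (Φ B) (Φ C) (Φ D) =
      (Matrix.of fun p q : Fin 2 × Fin n =>
        Φ (Matrix.of fun x y =>
          ((fromBlocks A B C D).submatrix e.symm e.symm) (p.1, x) (q.1, y)) p.2 q.2).submatrix
        e e := by
    have e1 : ∀ i : Fin n, e (Sum.inl i) = ((0 : Fin 2), i) := fun _ => rfl
    have e2 : ∀ i : Fin n, e (Sum.inr i) = ((1 : Fin 2), i) := fun _ => rfl
    have s1 : ∀ i : Fin n, e.symm ((0 : Fin 2), i) = Sum.inl i := fun _ => rfl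
    have s2 : ∀ i : Fin n, e.symm ((1 : Fin 2), i) = Sum.inr i := fun _ => rfl
    ext i j
    rcases i with i | i <;> rcases j with j | j
    all_goals
      simp only [submatrix_apply, of_apply, e1, e2, s1, s2, fromBlocks_apply₁₁,
        fromBlocks_apply₁₂, fromBlocks_apply₂₁, fromBlocks_apply₂₂]
      rfl

  rw [key]
  exact hN.submatrix _

lemma schwarz_blocks {n : ℕ} {Φ : Matrix (Fin n) (Fin n) ℂ →ₗ[ℂ] Matrix (Fin n) (Fin n) ℂ}
    (hcp : IsCompletelyPositive Φ) (hu : Φ 1 = 1) (A : Matrix (Fin n) (Fin n) ℂ) :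
    (fromBlocks (1 : Matrix (Fin n) (Fin n) ℂ) (Φ A) (Φ Aᴴ) (Φ (Aᴴ * A))).PosSemidef := by
  have h1 : (fromBlocks (1 : Matrix (Fin n) (Fin n) ℂ) A Aᴴ (Aᴴ * A)).PosSemidef := by
    have h2 := posSemidef_conjTranspose_mul_self
      (fromBlocks (1 : Matrix (Fin n) (Fin n) ℂ) A (0 : Matrix (Fin n) (Fin n) ℂ)
        (0 : Matrix (Fin n) (Fin n) ℂ))
    have h3 : (fromBlocks (1 : Matrix (Fin n) (Fin n) ℂ) A (0 : Matrix (Fin n) (Fin n) ℂ)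
        (0 : Matrix (Fin n) (Fin n) ℂ))ᴴ *
        fromBlocks (1 : Matrix (Fin n) (Fin n) ℂ) A (0 : Matrix (Fin n) (Fin n) ℂ)
        (0 : Matrix (Fin n) (Fin n) ℂ) =
        fromBlocks 1 A Aᴴ (Aᴴ * A) := by
      simp [fromBlocks_conjTranspose, fromBlocks_multiply]
    rwa [h3] at h2
  have := cp_fromBlocks hcp _ _ _ _ h1
  rwa [hu] at this

lemma herm_pres {n : ℕ} {Φ : Matrix (Fin n) (Fin n) ℂ →ₗ[ℂ] Matrix (Fin n) (Fin n) ℂ}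
    (hcp : IsCompletelyPositive Φ) (hu : Φ 1 = 1) (A : Matrix (Fin n) (Fin n) ℂ) :
    Φ Aᴴ = (Φ A)ᴴ := by
  have h := (schwarz_blocks hcp hu A).1
  rw [Matrix.IsHermitian, fromBlocks_conjTranspose, fromBlocks_inj] at h
  exact h.2.2.1.symm

lemma schwarz_ineq {n : ℕ} {Φ : Matrix (Fin n) (Fin n) ℂ →ₗ[ℂ] Matrix (Fin n) (Fin n) ℂ}
    (hcp : IsCompletelyPositive Φ) (hu : Φ 1 = 1) (A : Matrix (Fin n) (Fin n) ℂ) :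
    (Φ (Aᴴ * A) - (Φ A)ᴴ * Φ A).PosSemidef := by
  have h := schwarz_blocks hcp hu A
  rw [herm_pres hcp hu A] at h
  haveI : Invertible (1 : Matrix (Fin n) (Fin n) ℂ) := invertibleOne
  rw [Matrix.PosDef.fromBlocks₁₁ _ _ Matrix.PosDef.one] at h
  simpa using h

lemma psd_diag_nonneg {k : Type*} [Fintype k] [DecidableEq k] {M : Matrix k k ℂ}
    (hM : M.PosSemidef) (i : k) : 0 ≤ M i i := by
  have h := hM.dotProduct_mulVec_nonneg (Pi.single i 1)
  have hs : star ((Pi.single i (1 : ℂ)) : k → ℂ) = ((Pi.single i (1 : ℂ)) : k → ℂ) := by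
    ext j; by_cases hj : j = i <;> simp [hj, Pi.single_apply]
  rwa [hs, mulVec_single, MulOpposite.op_one, one_smul,
    single_dotProduct, one_mul, col_apply] at h

lemma psd_trace_nonneg {k : Type*} [Fintype k] [DecidableEq k] {M : Matrix k k ℂ}
    (hM : M.PosSemidef) : 0 ≤ M.trace := by
  exact Finset.sum_nonneg fun i _ => psd_diag_nonneg hM i

lemma psd_trace_zero {k : Type*} [Fintype k] [DecidableEq k] {M : Matrix k k ℂ}
    (hM : M.PosSemidef) (h : M.trace = 0) : M = 0 := by
  have hdiag : ∀ i, M i i = 0 := by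
    intro i
    have := (Finset.sum_eq_zero_iff_of_nonneg
      (fun i _ => psd_diag_nonneg hM i)).mp h i (Finset.mem_univ i)
    exact this
  have hcol : ∀ i, M *ᵥ Pi.single i 1 = 0 := by
    intro i
    rw [← hM.dotProduct_mulVec_zero_iff]
    have hs : star ((Pi.single i (1 : ℂ)) : k → ℂ) = ((Pi.single i (1 : ℂ)) : k → ℂ) := by
      ext j; by_cases hj : j = i <;> simp [hj, Pi.single_apply]
    rw [hs, mulVec_single, MulOpposite.op_one, one_smul,
      single_dotProduct, one_mul, col_apply, hdiag]
  ext i j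
  have h2 := congrFun (hcol j) i
  rw [mulVec_single] at h2
  simpa using h2

lemma qf_zero {n : ℕ} {Z : Matrix (Fin n) (Fin n) ℂ}
    (h : ∀ v : Fin n → ℂ, star v ⬝ᵥ (Z *ᵥ v) = 0) : Z = 0 := by
  have hT : ∀ x : EuclideanSpace ℂ (Fin n), inner ℂ ((Matrix.toEuclideanLin Z) x) x = (0 : ℂ) := by
    intro x
    rw [EuclideanSpace.inner_eq_star_dotProduct, Matrix.toEuclideanLin_apply]
    set v := (WithLp.equiv 2 (Fin n → ℂ)) x with hv
    rw [WithLp.ofLp_toLp]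
    rw [dotProduct_star, dotProduct_comm]
    exact (congrArg star (h x.ofLp)).trans (star_zero _)
  have := (inner_map_self_eq_zero _).mp hT
  exact (LinearEquiv.map_eq_zero_iff Matrix.toEuclideanLin).mp this

lemma key_psd {n : ℕ} {Φ : Matrix (Fin n) (Fin n) ℂ →ₗ[ℂ] Matrix (Fin n) (Fin n) ℂ}
    (hcp : IsCompletelyPositive Φ) (hu : Φ 1 = 1) {X Y : Matrix (Fin n) (Fin n) ℂ}
    (hXY : Φ X = Y) (hXXh : Φ (X * Xᴴ) = Y * Yᴴ) (W : Matrix (Fin n) (Fin n) ℂ) (c : ℂ) :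
    (c • (Φ (W * Xᴴ) - Φ W * Yᴴ) + (starRingEnd ℂ c) • (Φ (X * Wᴴ) - Y * (Φ W)ᴴ)
      + (c * starRingEnd ℂ c) • (Φ (W * Wᴴ) - Φ W * (Φ W)ᴴ)).PosSemidef := by
  have h := schwarz_ineq hcp hu ((X + c • W)ᴴ)
  have heq : Φ (((X + c • W)ᴴ)ᴴ * (X + c • W)ᴴ) - (Φ ((X + c • W)ᴴ))ᴴ * Φ ((X + c • W)ᴴ) =
      c • (Φ (W * Xᴴ) - Φ W * Yᴴ) + (starRingEnd ℂ c) • (Φ (X * Wᴴ) - Y * (Φ W)ᴴ)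
      + (c * starRingEnd ℂ c) • (Φ (W * Wᴴ) - Φ W * (Φ W)ᴴ) := by
    rw [herm_pres hcp hu]
    simp only [conjTranspose_conjTranspose, conjTranspose_add, conjTranspose_smul,
      map_add, _root_.map_smul, hXY, add_mul, mul_add, smul_mul_assoc, mul_smul_comm, smul_smul,
      starRingEnd_apply, star_star, hXXh]
    module
  rwa [heq] at h

lemma mult_rel {n : ℕ} {Φ : Matrix (Fin n) (Fin n) ℂ →ₗ[ℂ] Matrix (Fin n) (Fin n) ℂ}
    (hcp : IsCompletelyPositive Φ) (hu : Φ 1 = 1) {X Y : Matrix (Fin n) (Fin n) ℂ}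
    (hXY : Φ X = Y) (hXXh : Φ (X * Xᴴ) = Y * Yᴴ) (W : Matrix (Fin n) (Fin n) ℂ) :
    Φ (W * Xᴴ) = Φ W * Yᴴ := by
  set Z := Φ (W * Xᴴ) - Φ W * Yᴴ with hZ
  set P := Φ (W * Wᴴ) - Φ W * (Φ W)ᴴ with hP
  -- Z' = Zᴴ
  have h1 : Φ (X * Wᴴ) = (Φ (W * Xᴴ))ᴴ := by
    have := herm_pres hcp hu (W * Xᴴ)
    rwa [conjTranspose_mul, conjTranspose_conjTranspose] at this
  have hZ' : Φ (X * Wᴴ) - Y * (Φ W)ᴴ = Zᴴ := by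
    rw [hZ, conjTranspose_sub, conjTranspose_mul, conjTranspose_conjTranspose, h1]
  -- P is PSD
  have hPpsd : P.PosSemidef := by
    have := schwarz_ineq hcp hu Wᴴ
    rwa [conjTranspose_conjTranspose, herm_pres hcp hu, conjTranspose_conjTranspose] at this
  -- quadratic form of Z vanishes
  have hqf : ∀ v : Fin n → ℂ, star v ⬝ᵥ (Z *ᵥ v) = 0 := by
    intro v
    set α := star v ⬝ᵥ (Z *ᵥ v) with hα
    set p := star v ⬝ᵥ (P *ᵥ v) with hp
    have hppos : 0 ≤ p := hPpsd.dotProduct_mulVec_nonneg v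
    have hpim : p.im = 0 := by
      have := (Complex.le_def.mp hppos).2; simpa using this.symm
    have hpre : 0 ≤ p.re := by
      have := (Complex.le_def.mp hppos).1; simpa using this
    set t : ℝ := (p.re + 1)⁻¹ with ht
    have htpos : 0 < t := by positivity
    set c : ℂ := -(t : ℂ) * star α with hc
    have hkey := (key_psd hcp hu hXY hXXh W c).dotProduct_mulVec_nonneg v
    rw [hZ'] at hkey
    have hαc : star v ⬝ᵥ (Zᴴ *ᵥ v) = star α := by
      rw [dotProduct_mulVec, vecMul_conjTranspose, star_star, star_dotProduct, hα]
    have hexp : star v ⬝ᵥ ((c • Z + (starRingEnd ℂ c) • Zᴴ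
        + (c * starRingEnd ℂ c) • P) *ᵥ v) =
        c * α + (starRingEnd ℂ c) * star α + (c * starRingEnd ℂ c) * p := by
      simp [add_mulVec, smul_mulVec, dotProduct_add, dotProduct_smul, smul_eq_mul,
        hαc, hα, hp, mul_assoc]
    rw [hexp] at hkey
    have hsc : (starRingEnd ℂ) c = -(t : ℂ) * α := by
      simp [hc, _root_.map_mul, Complex.conj_ofReal]
    have hval : c * α + (starRingEnd ℂ c) * star α + (c * starRingEnd ℂ c) * p =
        (α * star α) * ((t : ℂ)^2 * p - 2 * t) := by
      rw [hsc, hc]; ring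
    rw [hval] at hkey
    -- convert to a real inequality
    have hαs : α * star α = (Complex.normSq α : ℂ) := by
      rw [Complex.star_def, Complex.mul_conj]
    have hpeq : p = ((p.re : ℝ) : ℂ) := by
      apply Complex.ext <;> simp [hpim]
    rw [hαs, hpeq] at hkey
    have hkey' : (0 : ℂ) ≤ ((Complex.normSq α * (t^2 * p.re - 2*t) : ℝ) : ℂ) := by
      convert hkey using 2
      push_cast
      ring
    rw [Complex.zero_le_real] at hkey'
    have hneg : t^2 * p.re - 2*t < 0 := by
      have h2 : t * p.re < 1 := by
        rw [ht]
        rw [inv_mul_lt_iff₀ (by positivity)]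
        linarith
      nlinarith
    have hnsq : Complex.normSq α = 0 := by nlinarith [Complex.normSq_nonneg α]
    exact Complex.normSq_eq_zero.mp hnsq
  have := qf_zero hqf
  rw [hZ, sub_eq_zero] at this
  exact this

/-- If `Φ₁, Φ₂ : Mₙ(ℂ) → Mₙ(ℂ)` are completely positive, trace-preserving,
unital linear maps and `Φ₁(X) = Y`, `Φ₂(Y) = X`, then `Φ₁(XW) = Y·Φ₁(W)` for all `W`. -/
theorem stmt1 (n : ℕ)
    (Φ₁ Φ₂ : Matrix (Fin n) (Fin n) ℂ →ₗ[ℂ] Matrix (Fin n) (Fin n) ℂ)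
    (hcp1 : IsCompletelyPositive Φ₁) (hcp2 : IsCompletelyPositive Φ₂)
    (htp1 : ∀ W, (Φ₁ W).trace = W.trace) (htp2 : ∀ W, (Φ₂ W).trace = W.trace)
    (hu1 : Φ₁ 1 = 1) (hu2 : Φ₂ 1 = 1)
    (X Y : Matrix (Fin n) (Fin n) ℂ) (hXY : Φ₁ X = Y) (hYX : Φ₂ Y = X) :
    ∀ W : Matrix (Fin n) (Fin n) ℂ, Φ₁ (X * W) = Y * Φ₁ W := by
  -- Step 1: Φ₁ (X * Xᴴ) = Y * Yᴴ
  have hs1 : (Φ₁ (X * Xᴴ) - Y * Yᴴ).PosSemidef := by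
    have := schwarz_ineq hcp1 hu1 Xᴴ
    rwa [conjTranspose_conjTranspose, herm_pres hcp1 hu1, conjTranspose_conjTranspose,
      hXY] at this
  have hs2 : (Φ₂ (Y * Yᴴ) - X * Xᴴ).PosSemidef := by
    have := schwarz_ineq hcp2 hu2 Yᴴ
    rwa [conjTranspose_conjTranspose, herm_pres hcp2 hu2, conjTranspose_conjTranspose,
      hYX] at this
  have ht2 : 0 ≤ (Y * Yᴴ).trace - (X * Xᴴ).trace := by
    have := psd_trace_nonneg hs2
    rwa [trace_sub, htp2] at this
  have htz : (Φ₁ (X * Xᴴ) - Y * Yᴴ).trace = 0 := by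
    refine le_antisymm ?_ (psd_trace_nonneg hs1)
    rw [trace_sub, htp1]
    exact sub_nonpos.mpr (sub_nonneg.mp ht2)
  have hXXh : Φ₁ (X * Xᴴ) = Y * Yᴴ := by
    have := psd_trace_zero hs1 htz
    rwa [sub_eq_zero] at this
  -- Step 2: multiplicative relation
  intro W
  have h := mult_rel hcp1 hu1 hXY hXXh Wᴴ
  have h2 := congrArg Matrix.conjTranspose h
  rw [← herm_pres hcp1 hu1] at h2
  simp only [conjTranspose_mul, conjTranspose_conjTranspose] at h2
  rw [← herm_pres hcp1 hu1, conjTranspose_conjTranspose] at h2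
  exact h2
end

section
/- Let Φ₁, Φ₂ : Mₙ(ℂ) → Mₙ(ℂ) be completely positive, trace-preserving, unital linear maps, and let X, Y ∈ Mₙ(ℂ) satisfy Φ₁(X) = Y and Φ₂(Y) = X. Then the adjoint Φ₁* (with respect to the trace inner product ⟨A,B⟩ = tr(A*B)) satisfies Φ₁*(Y) = X. -/
open Matrix ComplexOrder

namespace Stmt3Aux

/-- Kadison–Schwarz inequality for unital CP maps (quadratic-form version). -/
lemma schwarz {n : ℕ} (Φ : Matrix (Fin n) (Fin n) ℂ →ₗ[ℂ] Matrix (Fin n) (Fin n) ℂ)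
    (hcp : IsCompletelyPositive Φ) (hu : Φ 1 = 1) (A : Matrix (Fin n) (Fin n) ℂ) :
    ∀ v : Fin n → ℂ, 0 ≤ star v ⬝ᵥ ((Φ (Aᴴ * A) - (Φ A)ᴴ * (Φ A)) *ᵥ v) := by
  intro v
  classical
  set C : Fin 2 → Matrix (Fin n) (Fin n) ℂ := ![Aᴴ, 1] with hC
  set G : Matrix (Fin 2 × Fin n) (Fin n) ℂ := Matrix.of (fun p j => C p.1 p.2 j) with hG
  have hM : (G * Gᴴ).PosSemidef := posSemidef_self_mul_conjTranspose G
  have hN := hcp 2 (G * Gᴴ) hM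
  set N : Matrix (Fin 2 × Fin n) (Fin 2 × Fin n) ℂ :=
    Matrix.of (fun p q : Fin 2 × Fin n =>
      Φ (Matrix.of fun x y => (G * Gᴴ) (p.1, x) (q.1, y)) p.2 q.2) with hNdef
  have hblock : ∀ i k : Fin 2, (Matrix.of fun x y => (G * Gᴴ) ((i, x)) ((k, y)))
      = C i * (C k)ᴴ := by
    intro i k
    ext x y
    simp [hG, Matrix.mul_apply, Matrix.conjTranspose_apply]
  have hNapp : ∀ p q : Fin 2 × Fin n, N p q = Φ (C p.1 * (C q.1)ᴴ) p.2 q.2 := by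
    intro p q
    simp [hNdef, hblock]
  have hherm : Φ Aᴴ = (Φ A)ᴴ := by
    ext x y
    have h1 := hN.isHermitian
    have := congrFun (congrFun h1 ((1 : Fin 2), y)) ((0 : Fin 2), x)
    simp only [Matrix.conjTranspose_apply] at this
    rw [hNapp, hNapp] at this
    simp [hC] at this
    rw [Matrix.conjTranspose_apply]
    simpa using congrArg (starRingEnd ℂ) this
  set R := Φ A with hRdef
  set u : Fin n → ℂ := -(R *ᵥ v) with hudef
  set w : Fin 2 × Fin n → ℂ := fun p => ![v, u] p.1 p.2 with hwdef
  have hq := hN.dotProduct_mulVec_nonneg w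
  have e00 : C 0 * (C 0)ᴴ = Aᴴ * A := by simp [hC]
  have e01 : Φ (C 0 * (C 1)ᴴ) = Rᴴ := by simp [hC, hherm, hRdef]
  have e10 : Φ (C 1 * (C 0)ᴴ) = R := by simp [hC, hRdef]
  have e11 : Φ (C 1 * (C 1)ᴴ) = 1 := by simp [hC, hu]
  have key : star w ⬝ᵥ N *ᵥ w = star v ⬝ᵥ ((Φ (Aᴴ * A) - Rᴴ * R) *ᵥ v) := by
    have hsplit : star w ⬝ᵥ N *ᵥ w =
        star v ⬝ᵥ (Φ (Aᴴ * A) *ᵥ v) + star v ⬝ᵥ (Rᴴ *ᵥ u)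
          + (star u ⬝ᵥ (R *ᵥ v) + star u ⬝ᵥ u) := by
      simp only [dotProduct, mulVec, Fintype.sum_prod_type, Fin.sum_univ_two,
        hNapp, e01, e10, e11, hwdef, Matrix.cons_val_zero, Matrix.cons_val_one,
        Matrix.head_cons, Pi.star_apply, e00, Matrix.one_apply, Finset.sum_add_distrib,
        mul_add, Finset.mul_sum]
      simp only [mul_ite, ite_mul, mul_one, mul_zero, zero_mul, Finset.sum_ite_eq,
        Finset.mem_univ, if_true]
      ring_nf
    rw [hsplit, hudef]
    simp [Matrix.mulVec_neg, Matrix.mulVec_mulVec, Matrix.sub_mulVec, Matrix.neg_mulVec,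
      dotProduct_neg, dotProduct_sub, neg_dotProduct, star_neg]
    ring_nf
  rw [← key]
  exact hq

lemma trace_nonneg_of_quadform {n : ℕ} {D : Matrix (Fin n) (Fin n) ℂ}
    (h : ∀ v : Fin n → ℂ, 0 ≤ star v ⬝ᵥ (D *ᵥ v)) : 0 ≤ D.trace := by
  classical
  have hd : ∀ x, 0 ≤ D x x := by
    intro x
    have := h (Pi.single x 1)
    simpa [dotProduct, mulVec, Pi.single_apply, Finset.sum_ite_eq] using this
  exact Finset.sum_nonneg fun x _ => hd x

/-- Flatten a matrix into a Euclidean space vector. -/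
def e {n : ℕ} (A : Matrix (Fin n) (Fin n) ℂ) : EuclideanSpace ℂ (Fin n × Fin n) :=
  WithLp.toLp 2 (fun p : Fin n × Fin n => A p.1 p.2)

lemma e_inj {n : ℕ} {A B : Matrix (Fin n) (Fin n) ℂ} (h : e A = e B) : A = B := by
  ext i j
  exact congrArg (fun v => v (i, j)) h

lemma inner_e {n : ℕ} (A B : Matrix (Fin n) (Fin n) ℂ) :
    (inner ℂ (e A) (e B) : ℂ) = (Aᴴ * B).trace := by
  simp only [EuclideanSpace.inner_eq_star_dotProduct]
  simp [Matrix.trace, Matrix.diag, Matrix.mul_apply, Matrix.conjTranspose_apply,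
    dotProduct, e, Fintype.sum_prod_type, dotProduct, mul_comm]
  exact Finset.sum_comm ..

lemma norm_e_sq {n : ℕ} (A : Matrix (Fin n) (Fin n) ℂ) :
    ‖e A‖ ^ 2 = Complex.re (Aᴴ * A).trace := by
  rw [← inner_e A A]
  exact (inner_self_eq_norm_sq (𝕜 := ℂ) (e A)).symm

/-- Unital CP trace-preserving maps are contractions in the Frobenius norm. -/
lemma contraction {n : ℕ} (Φ : Matrix (Fin n) (Fin n) ℂ →ₗ[ℂ] Matrix (Fin n) (Fin n) ℂ)
    (hcp : IsCompletelyPositive Φ) (hu : Φ 1 = 1)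
    (htp : ∀ W, (Φ W).trace = W.trace) (A : Matrix (Fin n) (Fin n) ℂ) :
    ‖e (Φ A)‖ ≤ ‖e A‖ := by
  have h := trace_nonneg_of_quadform (schwarz Φ hcp hu A)
  rw [Matrix.trace_sub] at h
  have h2 : ((Φ A)ᴴ * (Φ A)).trace ≤ (Aᴴ * A).trace := htp (Aᴴ * A) ▸ sub_nonneg.mp h
  have h3 : Complex.re (((Φ A)ᴴ * (Φ A)).trace) ≤ Complex.re ((Aᴴ * A).trace) :=
    (Complex.le_def.mp h2).1
  have h4 : ‖e (Φ A)‖ ^ 2 ≤ ‖e A‖ ^ 2 := by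
    rw [norm_e_sq, norm_e_sq]; exact h3
  nlinarith [h4, norm_nonneg (e (Φ A)), norm_nonneg (e A)]

end Stmt3Aux

open Stmt3Aux in
/-- If `Φ₁, Φ₂ : Mₙ(ℂ) → Mₙ(ℂ)` are completely positive, trace-preserving,
unital linear maps with `Φ₁(X) = Y` and `Φ₂(Y) = X`, then the adjoint `Φ₁*` of `Φ₁` with
respect to the trace inner product `⟨A, B⟩ = tr(A* B)` satisfies `Φ₁*(Y) = X`. -/
theorem stmt3 (n : ℕ)
    (Φ₁ Φ₂ : Matrix (Fin n) (Fin n) ℂ →ₗ[ℂ] Matrix (Fin n) (Fin n) ℂ)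
    (hcp1 : IsCompletelyPositive Φ₁) (hcp2 : IsCompletelyPositive Φ₂)
    (htp1 : ∀ W, (Φ₁ W).trace = W.trace) (htp2 : ∀ W, (Φ₂ W).trace = W.trace)
    (hu1 : Φ₁ 1 = 1) (hu2 : Φ₂ 1 = 1)
    (X Y : Matrix (Fin n) (Fin n) ℂ) (hXY : Φ₁ X = Y) (hYX : Φ₂ Y = X)
    (Φadj : Matrix (Fin n) (Fin n) ℂ →ₗ[ℂ] Matrix (Fin n) (Fin n) ℂ)
    (hadj : ∀ A B : Matrix (Fin n) (Fin n) ℂ,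
      ((Φ₁ A)ᴴ * B).trace = (Aᴴ * Φadj B).trace) :
    Φadj Y = X := by
  -- transfer the adjoint identity to inner products
  have hadj' : ∀ A B : Matrix (Fin n) (Fin n) ℂ,
      (inner ℂ (e (Φ₁ A)) (e B) : ℂ) = inner ℂ (e A) (e (Φadj B)) := by
    intro A B
    rw [inner_e, inner_e]
    exact hadj A B
  -- norms
  have hnormY : ‖e Y‖ = ‖e X‖ := by
    have h1 : ‖e Y‖ ≤ ‖e X‖ := by
      rw [← hXY]; exact contraction Φ₁ hcp1 hu1 htp1 X
    have h2 : ‖e X‖ ≤ ‖e Y‖ := by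
      rw [← hYX]; exact contraction Φ₂ hcp2 hu2 htp2 Y
    linarith
  set z := e (Φadj Y) with hz
  have h1 : (inner ℂ (e X) z : ℂ) = inner ℂ (e Y) (e Y) := by
    rw [hz, ← hadj' X Y, hXY]
  have hznorm : ‖z‖ ≤ ‖e Y‖ := by
    have hb : (inner ℂ z z : ℂ) = inner ℂ (e (Φ₁ (Φadj Y))) (e Y) := (hadj' (Φadj Y) Y).symm
    have hc : ‖z‖ ^ 2 = Complex.re (inner ℂ (e (Φ₁ (Φadj Y))) (e Y) : ℂ) := by
      rw [← hb]; exact (inner_self_eq_norm_sq (𝕜 := ℂ) z).symm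
    have hd : Complex.re (inner ℂ (e (Φ₁ (Φadj Y))) (e Y) : ℂ) ≤ ‖e (Φ₁ (Φadj Y))‖ * ‖e Y‖ :=
      le_trans (Complex.re_le_norm _) (by
        simpa using norm_inner_le_norm (𝕜 := ℂ) (e (Φ₁ (Φadj Y))) (e Y))
    have he' : ‖e (Φ₁ (Φadj Y))‖ ≤ ‖z‖ := contraction Φ₁ hcp1 hu1 htp1 (Φadj Y)
    have hf : ‖z‖ ^ 2 ≤ ‖z‖ * ‖e Y‖ := by
      calc ‖z‖ ^ 2 ≤ ‖e (Φ₁ (Φadj Y))‖ * ‖e Y‖ := hc ▸ hd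
        _ ≤ ‖z‖ * ‖e Y‖ := mul_le_mul_of_nonneg_right he' (norm_nonneg _)
    nlinarith [norm_nonneg z, norm_nonneg (e Y)]
  have hsub : ‖z - e X‖ ^ 2 ≤ 0 := by
    have hns := norm_sub_sq (𝕜 := ℂ) z (e X)
    have hre : RCLike.re (inner ℂ z (e X) : ℂ) = ‖e Y‖ ^ 2 := by
      have hconj : (inner ℂ z (e X) : ℂ) = starRingEnd ℂ (inner ℂ (e X) z) :=
        (inner_conj_symm _ _).symm
      rw [hconj, h1]
      simpa using inner_self_eq_norm_sq (𝕜 := ℂ) (e Y)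
    rw [hns, hre]
    nlinarith [hznorm, hnormY, norm_nonneg z, norm_nonneg (e Y)]
  have hzero : z - e X = 0 := by
    have := norm_nonneg (z - e X)
    have h0 : ‖z - e X‖ = 0 := by nlinarith
    exact norm_eq_zero.mp h0
  have : z = e X := sub_eq_zero.mp hzero
  exact e_inj this
end

section
/- A linear map Φ : Mₙ(ℂ) → M_k(ℂ) is completely positive if and only if its Choi matrix Σ_{i,j=1}^{n} E_{ij} ⊗ Φ(E_{ij}) is positive semidefinite. -/
open Matrix ComplexOrder

/-- The Choi matrix `Σ_{i,j} E_{ij} ⊗ Φ(E_{ij})` of a linear map `Φ`, whose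
`((i,a),(j,b))`-entry is `Φ(E_{ij})_{a,b}`. -/
def choiMatrix {n m : Type*} [Fintype n] [Fintype m] [DecidableEq n]
    (Φ : Matrix n n ℂ →ₗ[ℂ] Matrix m m ℂ) : Matrix (n × m) (n × m) ℂ :=
  Matrix.of fun p q => Φ (Matrix.single p.1 q.1 1) p.2 q.2

lemma phi_apply_expand {n m : Type*} [Fintype n] [Fintype m] [DecidableEq n]
    (Φ : Matrix n n ℂ →ₗ[ℂ] Matrix m m ℂ) (A : Matrix n n ℂ) (a b : m) :
    Φ A a b = ∑ i, ∑ j, A i j * Φ (Matrix.single i j 1) a b := by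
  conv_lhs => rw [matrix_eq_sum_single A]
  simp only [map_sum, Matrix.sum_apply]
  refine Finset.sum_congr rfl fun i _ => Finset.sum_congr rfl fun j _ => ?_
  have hs : Matrix.single i j (A i j) = A i j • Matrix.single i j (1 : ℂ) := by
    rw [Matrix.smul_single, smul_eq_mul, mul_one]
  rw [hs, _root_.map_smul, Matrix.smul_apply, smul_eq_mul]

lemma sum4_comm {M : Type*} [AddCommMonoid M] {α β γ δ : Type*}
    [Fintype α] [Fintype β] [Fintype γ] [Fintype δ] (f : α → β → γ → δ → M) :
    ∑ a, ∑ b, ∑ c, ∑ d, f a b c d = ∑ c, ∑ d, ∑ a, ∑ b, f a b c d :=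
  calc ∑ a, ∑ b, ∑ c, ∑ d, f a b c d
      = ∑ a, ∑ c, ∑ b, ∑ d, f a b c d :=
        Finset.sum_congr rfl fun _ _ => Finset.sum_comm
    _ = ∑ c, ∑ a, ∑ b, ∑ d, f a b c d := Finset.sum_comm
    _ = ∑ c, ∑ a, ∑ d, ∑ b, f a b c d :=
        Finset.sum_congr rfl fun _ _ => Finset.sum_congr rfl fun _ _ => Finset.sum_comm
    _ = ∑ c, ∑ d, ∑ a, ∑ b, f a b c d :=
        Finset.sum_congr rfl fun _ _ => Finset.sum_comm

/-- Choi: A linear map `Φ : Mₙ(ℂ) → M_k(ℂ)` is completely positive if and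
only if its Choi matrix is positive semidefinite. -/
theorem stmt6 (n k : ℕ) (Φ : Matrix (Fin n) (Fin n) ℂ →ₗ[ℂ] Matrix (Fin k) (Fin k) ℂ) :
    IsCompletelyPositive Φ ↔ (choiMatrix Φ).PosSemidef := by
  constructor
  · intro h
    set B : Matrix (Fin 1) (Fin n × Fin n) ℂ :=
      Matrix.of fun _ p => if p.1 = p.2 then 1 else 0 with hBdef
    have h2 := h n (Bᴴ * B) (Matrix.posSemidef_conjTranspose_mul_self B)
    have inner : ∀ p q : Fin n × Fin k,
        (Matrix.of fun x y => (Bᴴ * B) (p.1, x) (q.1, y))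
          = Matrix.single p.1 q.1 (1 : ℂ) := by
      intro p q
      ext x y
      simp only [Matrix.of_apply, Matrix.mul_apply, Matrix.conjTranspose_apply, hBdef,
        Matrix.single, Fin.sum_univ_one]
      by_cases h1 : p.1 = x <;> by_cases h2 : q.1 = y <;> simp [h1, h2]
    have e : (Matrix.of fun p q : Fin n × Fin k =>
        Φ (Matrix.of fun x y => (Bᴴ * B) (p.1, x) (q.1, y)) p.2 q.2) = choiMatrix Φ := by
      ext p q
      rw [Matrix.of_apply, inner p q]
      rfl
    rwa [e] at h2
  · intro hC l M hM
    obtain ⟨B, hB⟩ : ∃ B : Matrix (Fin n × Fin k) (Fin n × Fin k) ℂ, choiMatrix Φ = Bᴴ * B := by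
      open scoped MatrixOrder in exact CStarAlgebra.nonneg_iff_eq_star_mul_self.mp hC.nonneg
    obtain ⟨C, hCM⟩ : ∃ C : Matrix (Fin l × Fin n) (Fin l × Fin n) ℂ, M = Cᴴ * C := by
      open scoped MatrixOrder in exact CStarAlgebra.nonneg_iff_eq_star_mul_self.mp hM.nonneg
    set D : Matrix ((Fin l × Fin n) × (Fin n × Fin k)) (Fin l × Fin k) ℂ :=
      Matrix.of fun w tb => ∑ j, C w.1 (tb.1, j) * B w.2 (j, tb.2) with hDdef
    have key : (Matrix.of fun p q : Fin l × Fin k =>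
        Φ (Matrix.of fun x y => M (p.1, x) (q.1, y)) p.2 q.2) = Dᴴ * D := by
      ext p q
      have hMe : ∀ (s : Fin l) (i : Fin n) (t : Fin l) (j : Fin n),
          M (s, i) (t, j) = ∑ u, star (C u (s, i)) * C u (t, j) := by
        intro s i t j
        rw [hCM]
        simp [Matrix.mul_apply, Matrix.conjTranspose_apply]
      have hChoi : ∀ (i j : Fin n) (a b : Fin k),
          Φ (Matrix.single i j 1) a b
            = ∑ r, star (B r (i, a)) * B r (j, b) := by
        intro i j a b
        have : choiMatrix Φ (i, a) (j, b) = (Bᴴ * B) (i, a) (j, b) := by rw [hB]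
        simpa [choiMatrix, Matrix.mul_apply, Matrix.conjTranspose_apply] using this
      rw [Matrix.of_apply, phi_apply_expand]
      simp only [Matrix.of_apply, hMe, hChoi]
      rw [Matrix.mul_apply]
      simp only [Matrix.conjTranspose_apply, hDdef, Matrix.of_apply]
      conv_rhs => rw [Fintype.sum_prod_type]
      simp only [Finset.sum_mul_sum, star_sum, star_mul']
      rw [sum4_comm]
      refine Finset.sum_congr rfl fun u _ => Finset.sum_congr rfl fun r _ =>
        Finset.sum_congr rfl fun i _ => Finset.sum_congr rfl fun j _ => ?_
      ring
    rw [key]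
    exact Matrix.posSemidef_conjTranspose_mul_self D
end

section
/- Fix k ≥ 1. Every graph F that underlies a bilabelled graph in the class P_k has treewidth at most 3k − 1. -/
/-- A `(k,k)`-bilabelled graph: a graph together with `k` in-labels (indexed by
`Sum.inl`) and `k` out-labels (indexed by `Sum.inr`). -/
structure BLG (k : ℕ) where
  V : Type
  adj : V → V → Prop
  lab : Fin k ⊕ Fin k → V

namespace BLG

/-- Cyclic successor of a label position in the cyclic order
`u₁, …, u_k, v_k, …, v₁` (i.e. `1, …, k, 2k, …, k+1`). -/
def rot (k : ℕ) : Fin k ⊕ Fin k → Fin k ⊕ Fin k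
  | Sum.inl i => if h : i.val + 1 < k then Sum.inl ⟨i.val + 1, h⟩ else Sum.inr i
  | Sum.inr i => if 0 < i.val then
      Sum.inr ⟨i.val - 1, lt_of_le_of_lt (Nat.sub_le _ _) i.isLt⟩ else Sum.inl i

/-- Adjacency on a disjoint union of two graphs. -/
def sumAdj {V W : Type} (a1 : V → V → Prop) (a2 : W → W → Prop) :
    V ⊕ W → V ⊕ W → Prop
  | Sum.inl x, Sum.inl y => a1 x y
  | Sum.inr x, Sum.inr y => a2 x y
  | _, _ => False

/-- Gluing relation for series composition: the `i`-th out-label of `A` is identified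
with the `i`-th in-label of `B`. -/
def seriesRel {k : ℕ} (A B : BLG k) : (A.V ⊕ B.V) → (A.V ⊕ B.V) → Prop :=
  fun x y => ∃ i : Fin k, x = Sum.inl (A.lab (Sum.inr i)) ∧ y = Sum.inr (B.lab (Sum.inl i))

/-- Series composition `A · B` of two `(k,k)`-bilabelled graphs. -/
def series {k : ℕ} (A B : BLG k) : BLG k where
  V := Quot (seriesRel A B)
  adj := fun q1 q2 => ∃ x y, Quot.mk _ x = q1 ∧ Quot.mk _ y = q2 ∧ sumAdj A.adj B.adj x y
  lab := fun p => match p with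
    | Sum.inl i => Quot.mk _ (Sum.inl (A.lab (Sum.inl i)))
    | Sum.inr i => Quot.mk _ (Sum.inr (B.lab (Sum.inr i)))

/-- Gluing relation for parallel composition: corresponding labelled vertices of `A`
and `B` are identified. -/
def parRel {k : ℕ} (A B : BLG k) : (A.V ⊕ B.V) → (A.V ⊕ B.V) → Prop :=
  fun x y => ∃ p : Fin k ⊕ Fin k, x = Sum.inl (A.lab p) ∧ y = Sum.inr (B.lab p)

/-- Parallel composition `A ⊙ B` of two `(k,k)`-bilabelled graphs. -/
def parallel {k : ℕ} (A B : BLG k) : BLG k where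
  V := Quot (parRel A B)
  adj := fun q1 q2 => ∃ x y, Quot.mk _ x = q1 ∧ Quot.mk _ y = q2 ∧ sumAdj A.adj B.adj x y
  lab := fun p => Quot.mk _ (Sum.inl (A.lab p))

/-- The action of the generator of the group `𝒞(1, …, k, 2k, …, k+1)` of cyclic
permutations of the labels. -/
def relabel {k : ℕ} (A : BLG k) : BLG k where
  V := A.V
  adj := A.adj
  lab := fun p => A.lab (rot k p)

/-- The atomic graphs in `𝒬ₖᴾ`: bilabelled minors of the cycle `Cₖ`, one for each
choice `c` assigning to each cycle edge `{p, rot p}` the value `0` (keep), `1`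
(contract) or `2` (delete). -/
def cycAtomic (k : ℕ) (c : Fin k ⊕ Fin k → Fin 3) : BLG k :=
  let r : (Fin k ⊕ Fin k) → (Fin k ⊕ Fin k) → Prop :=
    fun x y => c x = 1 ∧ y = rot k x
  { V := Quot r
    adj := fun q1 q2 => ∃ p, c p = 0 ∧
      ((Quot.mk r p = q1 ∧ Quot.mk r (rot k p) = q2) ∨
        (Quot.mk r p = q2 ∧ Quot.mk r (rot k p) = q1))
    lab := fun p => Quot.mk r p }

/-- The atomic graphs in `𝒬ₖˢ`: bilabelled minors of the perfect matching `Mₖ`, one for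
each choice `c` assigning to each matching edge `{inl i, inr i}` the value `0` (keep),
`1` (contract) or `2` (delete). -/
def matAtomic (k : ℕ) (c : Fin k → Fin 3) : BLG k :=
  let r : (Fin k ⊕ Fin k) → (Fin k ⊕ Fin k) → Prop :=
    fun x y => ∃ i, c i = 1 ∧ x = Sum.inl i ∧ y = Sum.inr i
  { V := Quot r
    adj := fun q1 q2 => ∃ i, c i = 0 ∧
      ((Quot.mk r (Sum.inl i) = q1 ∧ Quot.mk r (Sum.inr i) = q2) ∨
        (Quot.mk r (Sum.inl i) = q2 ∧ Quot.mk r (Sum.inr i) = q1))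
    lab := fun p => Quot.mk r p }

/-- The class `𝒫ₖ` of `(k,k)`-bilabelled graphs: generated from the atomic graphs
`𝒬ₖ = 𝒬ₖᴾ ∪ 𝒬ₖˢ` under series composition, parallel composition with graphs from
`𝒬ₖᴾ`, and cyclic permutations of the labels. -/
inductive InP (k : ℕ) : BLG k → Prop
  | cyc (c : Fin k ⊕ Fin k → Fin 3) : InP k (cycAtomic k c)
  | mat (c : Fin k → Fin 3) : InP k (matAtomic k c)
  | series {A B : BLG k} : InP k A → InP k B → InP k (A.series B)
  | par {A : BLG k} (c : Fin k ⊕ Fin k → Fin 3) :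
      InP k A → InP k ((cycAtomic k c).parallel A)
  | rot {A : BLG k} : InP k A → InP k A.relabel

end BLG

/-- `(V, adj)` has treewidth at most `w`: there is a tree decomposition all of whose
bags have at most `w + 1` vertices. -/
def HasTreewidthLE (V : Type) (adj : V → V → Prop) (w : ℕ) : Prop :=
  ∃ (ι : Type) (T : SimpleGraph ι) (β : ι → Set V),
    T.IsTree ∧
    (∀ v : V, ∃ t, v ∈ β t) ∧
    (∀ a b : V, adj a b → ∃ t, a ∈ β t ∧ b ∈ β t) ∧
    (∀ v : V, (T.induce {t | v ∈ β t}).Connected) ∧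
    (∀ t, (β t).ncard ≤ w + 1)


open SimpleGraph

section Glue

variable {α β : Type} (G : SimpleGraph α) (H : SimpleGraph β) (a0 : α) (b0 : β)

/-- Glue two graphs by one bridge edge `inl a0 — inr b0`. -/
def glueAdj : SimpleGraph (α ⊕ β) where
  Adj x y :=
    match x, y with
    | Sum.inl a, Sum.inl a' => G.Adj a a'
    | Sum.inr b, Sum.inr b' => H.Adj b b'
    | Sum.inl a, Sum.inr b => a = a0 ∧ b = b0
    | Sum.inr b, Sum.inl a => a = a0 ∧ b = b0
  symm := by
    refine ⟨?_⟩
    rintro (a | b) (a' | b') h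
    · exact G.adj_symm h
    · exact h
    · exact h
    · exact H.adj_symm h
  loopless := by
    refine ⟨?_⟩
    rintro (a | b) h
    · exact G.loopless.irrefl a h
    · exact H.loopless.irrefl b h

variable {G H a0 b0}

lemma glueAdj_inl_inl {a a' : α} :
    (glueAdj G H a0 b0).Adj (Sum.inl a) (Sum.inl a') ↔ G.Adj a a' := Iff.rfl

lemma glueAdj_inr_inr {b b' : β} :
    (glueAdj G H a0 b0).Adj (Sum.inr b) (Sum.inr b') ↔ H.Adj b b' := Iff.rfl

lemma glueAdj_bridge : (glueAdj G H a0 b0).Adj (Sum.inl a0) (Sum.inr b0) := ⟨rfl, rfl⟩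

/-- an adjacent pair not equal to the bridge keeps sides -/
lemma glueAdj_same_side {x y : α ⊕ β} (h : (glueAdj G H a0 b0).Adj x y)
    (hb : s(x, y) ≠ s(Sum.inl a0, Sum.inr b0)) : x.isLeft = y.isLeft := by
  rcases x with a | b <;> rcases y with a' | b'
  · rfl
  · obtain ⟨h1, h2⟩ := h; subst h1; subst h2; exact absurd rfl hb
  · obtain ⟨h1, h2⟩ := h; subst h1; subst h2
    exact absurd (Sym2.eq_swap) hb
  · rfl

lemma glueAdj_bridge_side {x y : α ⊕ β}
    (hb : s(x, y) = s(Sum.inl a0, Sum.inr b0)) : x.isLeft ≠ y.isLeft := by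
  rw [Sym2.eq_iff] at hb
  rcases hb with ⟨h1, h2⟩ | ⟨h1, h2⟩ <;> subst h1 <;> subst h2 <;> simp

open Classical in
lemma glueAdj_parity : ∀ {x y : α ⊕ β} (w : (glueAdj G H a0 b0).Walk x y),
    (x.isLeft = y.isLeft ↔ Even (w.edges.count s(Sum.inl a0, Sum.inr b0)))
  | x, _, SimpleGraph.Walk.nil => by simp
  | x, y, @SimpleGraph.Walk.cons _ _ _ z _ h p => by
    have ih := glueAdj_parity p
    rw [SimpleGraph.Walk.edges_cons, List.count_cons]
    by_cases hb : s(x, z) = s(Sum.inl a0, Sum.inr b0)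
    · have hside := glueAdj_bridge_side hb
      simp only [hb, beq_self_eq_true, if_true, Nat.even_add_one]
      rw [← ih]
      revert hside
      cases x.isLeft <;> cases z.isLeft <;> cases y.isLeft <;> simp
    · have hside := glueAdj_same_side h hb
      simp only [beq_iff_eq, hb, if_false, Nat.add_zero, hside, ih]

lemma glueAdj_support_side : ∀ {x y : α ⊕ β} (w : (glueAdj G H a0 b0).Walk x y),
    s(Sum.inl a0, Sum.inr b0) ∉ w.edges → ∀ z ∈ w.support, z.isLeft = x.isLeft
  | x, _, SimpleGraph.Walk.nil, _, z, hz => by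
    rw [SimpleGraph.Walk.support_nil, List.mem_singleton] at hz; subst hz; rfl
  | x, y, @SimpleGraph.Walk.cons _ _ _ u _ h p, hb, z, hz => by
    rw [SimpleGraph.Walk.support_cons] at hz
    rcases List.mem_cons.mp hz with hz | hz
    · subst hz; rfl
    · rw [SimpleGraph.Walk.edges_cons] at hb
      have h1 : s(x, u) ≠ s(Sum.inl a0, Sum.inr b0) := fun he => hb (by simp [he])
      have h2 : s(Sum.inl a0, Sum.inr b0) ∉ p.edges := fun he => hb (by simp [he])
      rw [glueAdj_support_side p h2 z hz, glueAdj_same_side h h1]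

/-- Lift a left-sided walk in the glued graph to `G`. -/
lemma glueAdj_lift_left : ∀ {x y : α ⊕ β} (w : (glueAdj G H a0 b0).Walk x y)
    (_ : ∀ z ∈ w.support, z.isLeft = true) {a b : α}
    (hx : x = Sum.inl a) (hy : y = Sum.inl b),
    ∃ w' : G.Walk a b,
      w'.map ⟨Sum.inl, fun h => h⟩ = w.copy hx hy
  | x, _, SimpleGraph.Walk.nil, hs, a, b, hx, hy => by
    subst hx
    obtain rfl : a = b := Sum.inl.inj hy
    exact ⟨SimpleGraph.Walk.nil, by simp [SimpleGraph.Walk.copy_nil]⟩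
  | x, y, @SimpleGraph.Walk.cons _ _ _ u _ h p, hs, a, b, hx, hy => by
    have hu : u.isLeft = true := hs u (by simp)
    obtain ⟨c, hc⟩ := Sum.isLeft_iff.mp hu
    obtain ⟨p', hp'⟩ := glueAdj_lift_left p (fun z hz => hs z (by simp [hz])) hc hy
    subst hx; subst hy; subst hc
    rw [SimpleGraph.Walk.copy_rfl_rfl] at hp' ⊢
    have hGadj : G.Adj a c := h
    refine ⟨SimpleGraph.Walk.cons hGadj p', ?_⟩
    rw [SimpleGraph.Walk.map_cons, hp']

lemma glueAdj_lift_right : ∀ {x y : α ⊕ β} (w : (glueAdj G H a0 b0).Walk x y)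
    (_ : ∀ z ∈ w.support, z.isLeft = false) {a b : β}
    (hx : x = Sum.inr a) (hy : y = Sum.inr b),
    ∃ w' : H.Walk a b,
      w'.map ⟨Sum.inr, fun h => h⟩ = w.copy hx hy
  | x, _, SimpleGraph.Walk.nil, hs, a, b, hx, hy => by
    subst hx
    obtain rfl : a = b := Sum.inr.inj hy
    exact ⟨SimpleGraph.Walk.nil, by simp [SimpleGraph.Walk.copy_nil]⟩
  | x, y, @SimpleGraph.Walk.cons _ _ _ u _ h p, hs, a, b, hx, hy => by
    have hu : u.isLeft = false := hs u (by simp)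
    have hex : ∃ c, u = Sum.inr c := by
      rcases u with c | c
      · simp at hu
      · exact ⟨c, rfl⟩
    obtain ⟨c, hc⟩ := hex
    obtain ⟨p', hp'⟩ := glueAdj_lift_right p (fun z hz => hs z (by simp [hz])) hc hy
    subst hx; subst hy; subst hc
    rw [SimpleGraph.Walk.copy_rfl_rfl] at hp' ⊢
    have hHadj : H.Adj a c := h
    refine ⟨SimpleGraph.Walk.cons hHadj p', ?_⟩
    rw [SimpleGraph.Walk.map_cons, hp']

open Classical in
theorem glueAdj_isTree (hG : G.IsTree) (hH : H.IsTree) :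
    (glueAdj G H a0 b0).IsTree := by
  constructor
  · -- connected
    have hreach : ∀ x : α ⊕ β, (glueAdj G H a0 b0).Reachable x (Sum.inl a0) := by
      rintro (a | b)
      · exact (hG.isConnected.preconnected a a0).map ⟨Sum.inl, fun h => h⟩
      · refine SimpleGraph.Reachable.trans ?_ (glueAdj_bridge.symm.reachable)
        exact (hH.isConnected.preconnected b b0).map ⟨Sum.inr, fun h => h⟩
    haveI : Nonempty (α ⊕ β) := ⟨Sum.inl a0⟩
    exact ⟨fun x y => (hreach x).trans (hreach y).symm⟩
  · -- acyclic
    intro v c hc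
    have heven := (glueAdj_parity c).mp rfl
    have hle : c.edges.count s(Sum.inl a0, Sum.inr b0) ≤ 1 :=
      List.nodup_iff_count_le_one.mp hc.edges_nodup _
    have hzero : c.edges.count s(Sum.inl a0, Sum.inr b0) = 0 := by
      rcases heven with ⟨n, hn⟩; omega
    have hnmem : s(Sum.inl a0, Sum.inr b0) ∉ c.edges := by
      rw [← List.count_eq_zero]; exact hzero
    have hside := glueAdj_support_side c hnmem
    rcases v with a | b
    · obtain ⟨w', hw'⟩ := glueAdj_lift_left c (by simpa using hside) rfl rfl
      rw [SimpleGraph.Walk.copy_rfl_rfl] at hw'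
      have : w'.IsCycle := by
        have := hw' ▸ hc
        exact (SimpleGraph.Walk.map_isCycle_iff_of_injective Sum.inl_injective).mp this
      exact hG.IsAcyclic w' this
    · obtain ⟨w', hw'⟩ := glueAdj_lift_right c (by simpa using hside) rfl rfl
      rw [SimpleGraph.Walk.copy_rfl_rfl] at hw'
      have : w'.IsCycle := by
        have := hw' ▸ hc
        exact (SimpleGraph.Walk.map_isCycle_iff_of_injective Sum.inr_injective).mp this
      exact hH.IsAcyclic w' this

end Glue


section MoreHelpers

open SimpleGraph

/-- Map reachability in an induced subgraph along an adjacency-preserving map. -/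
lemma reach_induce_map {ι ι' : Type} {G : SimpleGraph ι} {G' : SimpleGraph ι'}
    {f : ι → ι'} (hf : ∀ a b, G.Adj a b → G'.Adj (f a) (f b))
    {S : Set ι} {S' : Set ι'} (hS : ∀ x ∈ S, f x ∈ S')
    {x y : ι} (hx : x ∈ S) (hy : y ∈ S)
    (h : (G.induce S).Reachable ⟨x, hx⟩ ⟨y, hy⟩) :
    (G'.induce S').Reachable ⟨f x, hS x hx⟩ ⟨f y, hS y hy⟩ :=
  SimpleGraph.Reachable.map
    (⟨fun z => ⟨f z.1, hS _ z.2⟩, fun {a b} hadj => hf _ _ hadj⟩ :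
      (G.induce S) →g (G'.induce S')) h

lemma eqvGen_mem {γ : Type} {r : γ → γ → Prop} {L : Set γ}
    (hL : ∀ x y, r x y → x ∈ L ∧ y ∈ L) {x y : γ}
    (h : Relation.EqvGen r x y) : x = y ∨ (x ∈ L ∧ y ∈ L) := by
  induction h with
  | rel x y hr => exact Or.inr (hL x y hr)
  | refl x => exact Or.inl rfl
  | symm x y _ ih => rcases ih with h | h; exacts [Or.inl h.symm, Or.inr ⟨h.2, h.1⟩]
  | trans x y z _ _ ih1 ih2 =>
    rcases ih1 with h1 | h1
    · exact h1 ▸ ih2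
    · rcases ih2 with h2 | h2
      · exact Or.inr (h2 ▸ h1)
      · exact Or.inr ⟨h1.1, h2.2⟩

lemma ncard_range_le {γ δ : Type} [Fintype γ] (f : γ → δ) :
    (Set.range f).ncard ≤ Fintype.card γ := by
  rw [← Set.image_univ]
  calc (f '' Set.univ).ncard ≤ (Set.univ : Set γ).ncard :=
        Set.ncard_image_le Set.finite_univ
    _ = Fintype.card γ := by rw [Set.ncard_univ, Nat.card_eq_fintype_card]

namespace BLG

/-- Strengthened invariant: a tree decomposition with finite bags of size at most `3k`,
one of which contains all labelled vertices. -/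
def Good (k : ℕ) (A : BLG k) : Prop :=
  ∃ (ι : Type) (T : SimpleGraph ι) (β : ι → Set A.V) (r : ι),
    T.IsTree ∧
    (∀ v : A.V, ∃ t, v ∈ β t) ∧
    (∀ a b : A.V, A.adj a b → ∃ t, a ∈ β t ∧ b ∈ β t) ∧
    (∀ v : A.V, (T.induce {t | v ∈ β t}).Connected) ∧
    (∀ t, (β t).Finite ∧ (β t).ncard ≤ 3 * k) ∧
    Set.range A.lab ⊆ β r

lemma good_of_lab_surj {k : ℕ} (hk : 1 ≤ k) (A : BLG k)
    (hsurj : ∀ v : A.V, ∃ p, v = A.lab p) : Good k A := by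
  have huniv : (Set.univ : Set A.V) = Set.range A.lab := by
    ext v; simpa using (hsurj v).imp fun p hp => hp.symm
  refine ⟨Unit, ⊥, fun _ => Set.univ, (), ?_, ?_, ?_, ?_, ?_, ?_⟩
  · constructor
    · haveI : Nonempty Unit := ⟨()⟩
      exact ⟨fun u v => Subsingleton.elim u v ▸ SimpleGraph.Reachable.refl u⟩
    · exact SimpleGraph.isAcyclic_bot
  · exact fun v => ⟨(), trivial⟩
  · exact fun a b _ => ⟨(), trivial, trivial⟩
  · intro v
    haveI : Nonempty {t : Unit | v ∈ (Set.univ : Set A.V)} := ⟨⟨(), trivial⟩⟩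
    exact ⟨fun u w => Subsingleton.elim u w ▸ SimpleGraph.Reachable.refl u⟩
  · intro t
    rw [huniv]
    refine ⟨Set.finite_range _, ?_⟩
    calc (Set.range A.lab).ncard ≤ Fintype.card (Fin k ⊕ Fin k) := ncard_range_le _
      _ = 2 * k := by simp [two_mul]
      _ ≤ 3 * k := by omega
  · rw [huniv]

lemma good_relabel {k : ℕ} {A : BLG k} (h : Good k A) : Good k A.relabel := by
  obtain ⟨ι, T, β, r, h1, h2, h3, h4, h5, h6⟩ := h
  refine ⟨ι, T, β, r, h1, h2, h3, h4, h5, ?_⟩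
  rintro v ⟨p, hp⟩
  exact h6 ⟨rot k p, hp⟩

lemma good_parallel {k : ℕ} {C A : BLG k} (hC : ∀ v : C.V, ∃ p, v = C.lab p)
    (h : Good k A) : Good k (C.parallel A) := by
  obtain ⟨ι, T, β, r, htree, hcov, hedge, hconn, hsize, hlab⟩ := h
  set π : C.V ⊕ A.V → (C.parallel A).V := Quot.mk (parRel C A) with hπdef
  have hkey : ∀ p, π (Sum.inl (C.lab p)) = π (Sum.inr (A.lab p)) :=
    fun p => Quot.sound ⟨p, rfl, rfl⟩
  have hrep : ∀ v : (C.parallel A).V, ∃ a : A.V, π (Sum.inr a) = v := by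
    intro v
    induction v using Quot.ind with
    | _ x =>
      rcases x with q | a
      · obtain ⟨p, hp⟩ := hC q
        exact ⟨A.lab p, by rw [← hkey p, hp]⟩
      · exact ⟨a, rfl⟩
  have hpre : ∀ a a' : A.V, π (Sum.inr a) = π (Sum.inr a') →
      a = a' ∨ (a ∈ Set.range A.lab ∧ a' ∈ Set.range A.lab) := by
    intro a a' hp
    have := eqvGen_mem (L := {x | (∃ p, x = Sum.inl (C.lab p)) ∨ ∃ p, x = Sum.inr (A.lab p)})
      (fun x y hxy => by
        obtain ⟨p, hx, hy⟩ := hxy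
        exact ⟨Or.inl ⟨p, hx⟩, Or.inr ⟨p, hy⟩⟩) (Quot.eq.mp hp)
    rcases this with heq | ⟨ha, ha'⟩
    · exact Or.inl (Sum.inr.inj heq)
    · refine Or.inr ⟨?_, ?_⟩
      · rcases ha with ⟨p, hp⟩ | ⟨p, hp⟩
        · exact absurd hp (by simp)
        · exact ⟨p, (Sum.inr.inj hp).symm⟩
      · rcases ha' with ⟨p, hp⟩ | ⟨p, hp⟩
        · exact absurd hp (by simp)
        · exact ⟨p, (Sum.inr.inj hp).symm⟩
  refine ⟨ι, T, fun t => (fun a => π (Sum.inr a)) '' β t, r, htree, ?_, ?_, ?_, ?_, ?_⟩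
  · -- cover
    intro v
    obtain ⟨a, ha⟩ := hrep v
    obtain ⟨t, ht⟩ := hcov a
    exact ⟨t, a, ht, ha⟩
  · -- edges
    rintro q1 q2 ⟨x, y, hx, hy, hxy⟩
    rcases x with q | a <;> rcases y with q' | a'
    · obtain ⟨p, hp⟩ := hC q
      obtain ⟨p', hp'⟩ := hC q'
      refine ⟨r, ⟨A.lab p, hlab ⟨p, rfl⟩, ?_⟩, ⟨A.lab p', hlab ⟨p', rfl⟩, ?_⟩⟩
      · show π (Sum.inr (A.lab p)) = q1
        rw [← hkey p, ← hp]; exact hx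
      · show π (Sum.inr (A.lab p')) = q2
        rw [← hkey p', ← hp']; exact hy
    · exact hxy.elim
    · exact hxy.elim
    · obtain ⟨t, ht, ht'⟩ := hedge a a' hxy
      exact ⟨t, ⟨a, ht, hx⟩, ⟨a', ht', hy⟩⟩
  · -- connectivity
    intro v
    have hSsub : ∀ (a : A.V), π (Sum.inr a) = v →
        {t | a ∈ β t} ⊆ {t | v ∈ (fun a => π (Sum.inr a)) '' β t} :=
      fun a hav t hat => ⟨a, hat, hav⟩
    have reachN : ∀ (a : A.V) (hav : π (Sum.inr a) = v) (t t' : ι)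
        (ht : a ∈ β t) (ht' : a ∈ β t'),
        (T.induce {t | v ∈ (fun a => π (Sum.inr a)) '' β t}).Reachable
          ⟨t, hSsub a hav ht⟩ ⟨t', hSsub a hav ht'⟩ := by
      intro a hav t t' ht ht'
      exact reach_induce_map (f := fun t => t) (fun _ _ h => h) (hSsub a hav) ht ht'
        ((hconn a).preconnected ⟨t, ht⟩ ⟨t', ht'⟩)
    obtain ⟨a0, ha0⟩ := hrep v
    obtain ⟨t0, ht0⟩ := hcov a0
    haveI : Nonempty {t | v ∈ (fun a => π (Sum.inr a)) '' β t} := ⟨⟨t0, a0, ht0, ha0⟩⟩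
    refine ⟨fun u w => ?_⟩
    obtain ⟨tu, hu⟩ := u
    obtain ⟨tw, hw⟩ := w
    obtain ⟨au, hau, hπu⟩ := hu
    obtain ⟨aw, haw, hπw⟩ := hw
    rcases hpre au aw (hπu.trans hπw.symm) with heq | ⟨⟨pu, hpu⟩, ⟨pw, hpw⟩⟩
    · subst heq
      exact reachN au hπu tu tw hau haw
    · exact (reachN au hπu tu r hau (hpu ▸ hlab ⟨pu, rfl⟩)).trans
        (reachN aw hπw r tw (hpw ▸ hlab ⟨pw, rfl⟩) haw)
  · -- sizes
    intro t
    exact ⟨(hsize t).1.image _, le_trans (Set.ncard_image_le (hsize t).1) (hsize t).2⟩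
  · -- root
    rintro v ⟨p, hp⟩
    refine ⟨A.lab p, hlab ⟨p, rfl⟩, ?_⟩
    show π (Sum.inr (A.lab p)) = v
    rw [← hkey p]; exact hp

lemma unit_bot_isTree : (⊥ : SimpleGraph Unit).IsTree := by
  constructor
  · haveI : Nonempty Unit := ⟨()⟩
    exact ⟨fun u v => Subsingleton.elim u v ▸ SimpleGraph.Reachable.refl u⟩
  · exact SimpleGraph.isAcyclic_bot

lemma good_series {k : ℕ} {A B : BLG k} (hA : Good k A) (hB : Good k B) :
    Good k (A.series B) := by
  classical
  obtain ⟨ιA, TA, βA, rA, tA, covA, edgeA, connA, sizeA, labA⟩ := hA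
  obtain ⟨ιB, TB, βB, rB, tB, covB, edgeB, connB, sizeB, labB⟩ := hB
  set π : A.V ⊕ B.V → (A.series B).V := Quot.mk (seriesRel A B) with hπdef
  have hkey : ∀ i : Fin k,
      π (Sum.inl (A.lab (Sum.inr i))) = π (Sum.inr (B.lab (Sum.inl i))) :=
    fun i => Quot.sound ⟨i, rfl, rfl⟩
  have hpre : ∀ x y : A.V ⊕ B.V, π x = π y → x = y ∨
      (((∃ p, x = Sum.inl (A.lab p)) ∨ (∃ p, x = Sum.inr (B.lab p))) ∧
       ((∃ p, y = Sum.inl (A.lab p)) ∨ (∃ p, y = Sum.inr (B.lab p)))) := by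
    intro x y hxy
    exact eqvGen_mem
      (L := {x | (∃ p, x = Sum.inl (A.lab p)) ∨ ∃ p, x = Sum.inr (B.lab p)})
      (fun x y hxy => by
        obtain ⟨i, hx, hy⟩ := hxy
        exact ⟨Or.inl ⟨Sum.inr i, hx⟩, Or.inr ⟨Sum.inl i, hy⟩⟩) (Quot.eq.mp hxy)
  -- the tree
  set T1 : SimpleGraph (ιA ⊕ Unit) := glueAdj TA (⊥ : SimpleGraph Unit) rA () with hT1
  set T : SimpleGraph ((ιA ⊕ Unit) ⊕ ιB) := glueAdj T1 TB (Sum.inr ()) rB with hT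
  have htreeT : T.IsTree := glueAdj_isTree (glueAdj_isTree tA unit_bot_isTree) tB
  set mid : (ιA ⊕ Unit) ⊕ ιB := Sum.inl (Sum.inr ()) with hmiddef
  set midbag : Set (A.series B).V :=
    Set.range (fun p => π (Sum.inl (A.lab p))) ∪
      Set.range (fun i : Fin k => π (Sum.inr (B.lab (Sum.inr i)))) with hmb
  set βs : ((ιA ⊕ Unit) ⊕ ιB) → Set (A.series B).V := fun t =>
    match t with
    | Sum.inl (Sum.inl x) => (fun a => π (Sum.inl a)) '' βA x
    | Sum.inl (Sum.inr _) => midbag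
    | Sum.inr y => (fun b => π (Sum.inr b)) '' βB y
    with hβs
  have hmidA : ∀ p, π (Sum.inl (A.lab p)) ∈ midbag := fun p => Or.inl ⟨p, rfl⟩
  have hmidB : ∀ p, π (Sum.inr (B.lab p)) ∈ midbag := by
    rintro (i | i)
    · rw [← hkey i]; exact hmidA (Sum.inr i)
    · exact Or.inr ⟨i, rfl⟩
  refine ⟨(ιA ⊕ Unit) ⊕ ιB, T, βs, mid, htreeT, ?_, ?_, ?_, ?_, ?_⟩
  · -- cover
    intro v
    induction v using Quot.ind with
    | _ x =>
      rcases x with a | b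
      · obtain ⟨t, ht⟩ := covA a
        exact ⟨Sum.inl (Sum.inl t), a, ht, rfl⟩
      · obtain ⟨t, ht⟩ := covB b
        exact ⟨Sum.inr t, b, ht, rfl⟩
  · -- edges
    rintro q1 q2 ⟨x, y, hx, hy, hxy⟩
    rcases x with a | b <;> rcases y with a' | b'
    · obtain ⟨t, ht, ht'⟩ := edgeA a a' hxy
      exact ⟨Sum.inl (Sum.inl t), ⟨a, ht, hx⟩, ⟨a', ht', hy⟩⟩
    · exact hxy.elim
    · exact hxy.elim
    · obtain ⟨t, ht, ht'⟩ := edgeB b b' hxy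
      exact ⟨Sum.inr t, ⟨b, ht, hx⟩, ⟨b', ht', hy⟩⟩
  · -- connectivity
    intro v
    set S : Set ((ιA ⊕ Unit) ⊕ ιB) := {t | v ∈ βs t} with hS
    have hsubA : ∀ (a : A.V), π (Sum.inl a) = v →
        ∀ x, a ∈ βA x → Sum.inl (Sum.inl x) ∈ S :=
      fun a hav x hx => ⟨a, hx, hav⟩
    have hsubB : ∀ (b : B.V), π (Sum.inr b) = v →
        ∀ y, b ∈ βB y → Sum.inr y ∈ S :=
      fun b hbv y hy => ⟨b, hy, hbv⟩
    have reachA : ∀ (a : A.V) (hav : π (Sum.inl a) = v) (x x' : ιA)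
        (hx : a ∈ βA x) (hx' : a ∈ βA x'),
        (T.induce S).Reachable ⟨Sum.inl (Sum.inl x), hsubA a hav x hx⟩
          ⟨Sum.inl (Sum.inl x'), hsubA a hav x' hx'⟩ := by
      intro a hav x x' hx hx'
      exact reach_induce_map (f := fun t => Sum.inl (Sum.inl t))
        (fun _ _ h => h) (fun t ht => hsubA a hav t ht) hx hx'
        ((connA a).preconnected ⟨x, hx⟩ ⟨x', hx'⟩)
    have reachB : ∀ (b : B.V) (hbv : π (Sum.inr b) = v) (y y' : ιB)
        (hy : b ∈ βB y) (hy' : b ∈ βB y'),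
        (T.induce S).Reachable ⟨Sum.inr y, hsubB b hbv y hy⟩
          ⟨Sum.inr y', hsubB b hbv y' hy'⟩ := by
      intro b hbv y y' hy hy'
      exact reach_induce_map (f := fun t => Sum.inr t)
        (fun _ _ h => h) (fun t ht => hsubB b hbv t ht) hy hy'
        ((connB b).preconnected ⟨y, hy⟩ ⟨y', hy'⟩)
    by_cases hv : (∃ p, v = π (Sum.inl (A.lab p))) ∨ (∃ p, v = π (Sum.inr (B.lab p)))
    · have hmidS : mid ∈ S := by
        show v ∈ midbag
        rcases hv with ⟨p, hp⟩ | ⟨p, hp⟩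
        · rw [hp]; exact hmidA p
        · rw [hp]; exact hmidB p
      have memRangeA : ∀ a : A.V, π (Sum.inl a) = v → a ∈ Set.range A.lab := by
        intro a hav
        rcases hv with ⟨p, hp⟩ | ⟨p, hp⟩
        · rcases hpre (Sum.inl a) (Sum.inl (A.lab p)) (hav.trans hp) with heq | ⟨hL, _⟩
          · exact ⟨p, (Sum.inl.inj heq).symm⟩
          · rcases hL with ⟨p', hp'⟩ | ⟨p', hp'⟩
            · exact ⟨p', (Sum.inl.inj hp').symm⟩
            · exact absurd hp' (by simp)
        · rcases hpre (Sum.inl a) (Sum.inr (B.lab p)) (hav.trans hp) with heq | ⟨hL, _⟩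
          · exact absurd heq (by simp)
          · rcases hL with ⟨p', hp'⟩ | ⟨p', hp'⟩
            · exact ⟨p', (Sum.inl.inj hp').symm⟩
            · exact absurd hp' (by simp)
      have memRangeB : ∀ b : B.V, π (Sum.inr b) = v → b ∈ Set.range B.lab := by
        intro b hbv
        rcases hv with ⟨p, hp⟩ | ⟨p, hp⟩
        · rcases hpre (Sum.inr b) (Sum.inl (A.lab p)) (hbv.trans hp) with heq | ⟨hL, _⟩
          · exact absurd heq (by simp)
          · rcases hL with ⟨p', hp'⟩ | ⟨p', hp'⟩
            · exact absurd hp' (by simp)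
            · exact ⟨p', (Sum.inr.inj hp').symm⟩
        · rcases hpre (Sum.inr b) (Sum.inr (B.lab p)) (hbv.trans hp) with heq | ⟨hL, _⟩
          · exact ⟨p, (Sum.inr.inj heq).symm⟩
          · rcases hL with ⟨p', hp'⟩ | ⟨p', hp'⟩
            · exact absurd hp' (by simp)
            · exact ⟨p', (Sum.inr.inj hp').symm⟩
      have reachMid : ∀ (t : (ιA ⊕ Unit) ⊕ ιB) (ht : t ∈ S),
          (T.induce S).Reachable ⟨t, ht⟩ ⟨mid, hmidS⟩ := by
        rintro ((x | u) | y) ht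
        · obtain ⟨a, hax, hav⟩ := ht
          obtain ⟨p, hp⟩ := memRangeA a hav
          have harA : a ∈ βA rA := labA ⟨p, hp⟩
          refine (reachA a hav x rA hax harA).trans ?_
          exact SimpleGraph.Adj.reachable
            (show T1.Adj (Sum.inl rA) (Sum.inr ()) from ⟨rfl, rfl⟩)
        · cases u
          exact SimpleGraph.Reachable.refl _
        · obtain ⟨b, hby, hbv⟩ := ht
          obtain ⟨p, hp⟩ := memRangeB b hbv
          have hrB : b ∈ βB rB := labB ⟨p, hp⟩
          refine (reachB b hbv y rB hby hrB).trans ?_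
          exact SimpleGraph.Adj.reachable
            (show T.Adj (Sum.inr rB) (Sum.inl (Sum.inr ())) from ⟨rfl, rfl⟩)
      haveI : Nonempty ↥S := ⟨⟨mid, hmidS⟩⟩
      exact ⟨fun u w => (reachMid u.1 u.2).trans (reachMid w.1 w.2).symm⟩
    · push_neg at hv
      obtain ⟨hv1, hv2⟩ := hv
      obtain ⟨x0, hx0⟩ : ∃ x0 : A.V ⊕ B.V, π x0 = v := Quot.exists_rep v
      rcases x0 with a0 | b0
      · have ha0r : a0 ∉ Set.range A.lab := by
          rintro ⟨p, hp⟩; exact hv1 p (by rw [← hx0, hp])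
        have hSA : ∀ t, t ∈ S → ∃ x, t = Sum.inl (Sum.inl x) ∧ a0 ∈ βA x := by
          rintro ((x | u) | y) ht
          · obtain ⟨a, hax, hav⟩ := ht
            rcases hpre (Sum.inl a) (Sum.inl a0) (hav.trans hx0.symm) with heq | ⟨_, hL⟩
            · exact ⟨x, rfl, (Sum.inl.inj heq) ▸ hax⟩
            · rcases hL with ⟨p, hp⟩ | ⟨p, hp⟩
              · exact absurd ⟨p, (Sum.inl.inj hp).symm⟩ ha0r
              · exact absurd hp (by simp)
          · have ht' : v ∈ midbag := ht
            rcases ht' with ⟨p, hp⟩ | ⟨i, hp⟩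
            · exact absurd hp.symm (hv1 p)
            · exact absurd hp.symm (hv2 (Sum.inr i))
          · obtain ⟨b, hby, hbv⟩ := ht
            rcases hpre (Sum.inr b) (Sum.inl a0) (hbv.trans hx0.symm) with heq | ⟨_, hL⟩
            · exact absurd heq (by simp)
            · rcases hL with ⟨p, hp⟩ | ⟨p, hp⟩
              · exact absurd ⟨p, (Sum.inl.inj hp).symm⟩ ha0r
              · exact absurd hp (by simp)
        obtain ⟨xc, hxc⟩ := covA a0
        haveI : Nonempty ↥S := ⟨⟨Sum.inl (Sum.inl xc), hsubA a0 hx0 xc hxc⟩⟩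
        refine ⟨fun u w => ?_⟩
        obtain ⟨xu, hxu, hau⟩ := hSA u.1 u.2
        obtain ⟨xw, hxw, haw⟩ := hSA w.1 w.2
        have hreach := reachA a0 hx0 xu xw hau haw
        have hu' : u = ⟨Sum.inl (Sum.inl xu), hsubA a0 hx0 xu hau⟩ := Subtype.ext hxu
        have hw' : w = ⟨Sum.inl (Sum.inl xw), hsubA a0 hx0 xw haw⟩ := Subtype.ext hxw
        rw [hu', hw']; exact hreach
      · have hb0r : b0 ∉ Set.range B.lab := by
          rintro ⟨p, hp⟩; exact hv2 p (by rw [← hx0, hp])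
        have hSB : ∀ t, t ∈ S → ∃ y, t = Sum.inr y ∧ b0 ∈ βB y := by
          rintro ((x | u) | y) ht
          · obtain ⟨a, hax, hav⟩ := ht
            rcases hpre (Sum.inl a) (Sum.inr b0) (hav.trans hx0.symm) with heq | ⟨_, hL⟩
            · exact absurd heq (by simp)
            · rcases hL with ⟨p, hp⟩ | ⟨p, hp⟩
              · exact absurd hp (by simp)
              · exact absurd ⟨p, (Sum.inr.inj hp).symm⟩ hb0r
          · have ht' : v ∈ midbag := ht
            rcases ht' with ⟨p, hp⟩ | ⟨i, hp⟩
            · exact absurd hp.symm (hv1 p)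
            · exact absurd hp.symm (hv2 (Sum.inr i))
          · obtain ⟨b, hby, hbv⟩ := ht
            rcases hpre (Sum.inr b) (Sum.inr b0) (hbv.trans hx0.symm) with heq | ⟨_, hL⟩
            · exact ⟨y, rfl, (Sum.inr.inj heq) ▸ hby⟩
            · rcases hL with ⟨p, hp⟩ | ⟨p, hp⟩
              · exact absurd hp (by simp)
              · exact absurd ⟨p, (Sum.inr.inj hp).symm⟩ hb0r
        obtain ⟨yc, hyc⟩ := covB b0
        haveI : Nonempty ↥S := ⟨⟨Sum.inr yc, hsubB b0 hx0 yc hyc⟩⟩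
        refine ⟨fun u w => ?_⟩
        obtain ⟨yu, hyu, hbu⟩ := hSB u.1 u.2
        obtain ⟨yw, hyw, hbw⟩ := hSB w.1 w.2
        have hreach := reachB b0 hx0 yu yw hbu hbw
        have hu' : u = ⟨Sum.inr yu, hsubB b0 hx0 yu hbu⟩ := Subtype.ext hyu
        have hw' : w = ⟨Sum.inr yw, hsubB b0 hx0 yw hbw⟩ := Subtype.ext hyw
        rw [hu', hw']; exact hreach
  · -- sizes
    rintro ((x | u) | y)
    · exact ⟨((sizeA x).1.image _), le_trans (Set.ncard_image_le (sizeA x).1) (sizeA x).2⟩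
    · constructor
      · exact (Set.finite_range _).union (Set.finite_range _)
      · calc midbag.ncard ≤ (Set.range (fun p => π (Sum.inl (A.lab p)))).ncard +
              (Set.range (fun i : Fin k => π (Sum.inr (B.lab (Sum.inr i))))).ncard :=
              Set.ncard_union_le _ _
          _ ≤ Fintype.card (Fin k ⊕ Fin k) + Fintype.card (Fin k) :=
              Nat.add_le_add (ncard_range_le _) (ncard_range_le _)
          _ ≤ 3 * k := by simp [two_mul]; omega
    · exact ⟨((sizeB y).1.image _), le_trans (Set.ncard_image_le (sizeB y).1) (sizeB y).2⟩
  · -- root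
    rintro v ⟨p, hp⟩
    rcases p with i | i
    · exact hp ▸ hmidA (Sum.inl i)
    · exact hp ▸ hmidB (Sum.inr i)

end BLG

end MoreHelpers

/-- every graph underlying a bilabelled graph in `𝒫ₖ` has treewidth at
most `3k - 1`. -/
theorem stmt12 (k : ℕ) (hk : 1 ≤ k) (A : BLG k) (hA : BLG.InP k A) :
    HasTreewidthLE A.V A.adj (3 * k - 1) := by
  have hgood : BLG.Good k A := by
    induction hA with
    | cyc c =>
      refine BLG.good_of_lab_surj hk _ (fun v => ?_)
      induction v using Quot.ind with
      | _ p => exact ⟨p, rfl⟩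
    | mat c =>
      refine BLG.good_of_lab_surj hk _ (fun v => ?_)
      induction v using Quot.ind with
      | _ p => exact ⟨p, rfl⟩
    | series hA hB ihA ihB => exact BLG.good_series ihA ihB
    | par c hA ih =>
      refine BLG.good_parallel (fun v => ?_) ih
      induction v using Quot.ind with
      | _ p => exact ⟨p, rfl⟩
    | rot hA ih => exact BLG.good_relabel ih
  obtain ⟨ι, T, β, r, h1, h2, h3, h4, h5, h6⟩ := hgood
  refine ⟨ι, T, β, h1, h2, h3, h4, fun t => ?_⟩
  have := (h5 t).2
  omega
end

section
/- For every k ∈ ℕ, the k × k grid graph is (the underlying unlabelled graph of) an element of the class P_k. Concretely, let V_k be the (k,k)-bilabelled graph obtained as the parallel composition of the matching M_k and the cycle C_k; then the series composition of k−1 copies of V_k has the k × k grid as its underlying graph. -/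
/-- Adjacency of the `k × k` grid graph: vertices at `ℓ¹`-distance `1` are adjacent. -/
def gridAdj (k : ℕ) (a b : Fin k × Fin k) : Prop :=
  (a.1 = b.1 ∧ (a.2.val + 1 = b.2.val ∨ b.2.val + 1 = a.2.val)) ∨
  (a.2 = b.2 ∧ (a.1.val + 1 = b.1.val ∨ b.1.val + 1 = a.1.val))

-- ==== auxiliary development ====
namespace StmtAux
open BLG

/-- grid adjacency on an `m × k` rectangle. -/
def rAdj (m k : ℕ) (a b : Fin m × Fin k) : Prop :=
  (a.1 = b.1 ∧ (a.2.val + 1 = b.2.val ∨ b.2.val + 1 = a.2.val)) ∨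
  (a.2 = b.2 ∧ (a.1.val + 1 = b.1.val ∨ b.1.val + 1 = a.1.val))

lemma rAdj_iff {m k : ℕ} (a b : Fin m × Fin k) :
    rAdj m k a b ↔
      ((a.1.val = b.1.val ∧ (a.2.val + 1 = b.2.val ∨ b.2.val + 1 = a.2.val)) ∨
       (a.2.val = b.2.val ∧ (a.1.val + 1 = b.1.val ∨ b.1.val + 1 = a.1.val))) := by
  simp [rAdj, Fin.ext_iff]

/-- `A` is the `(m+1) × k` grid with in-labels the top row and out-labels the bottom row. -/
def Desc {k : ℕ} (A : BLG k) (m : ℕ) : Prop :=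
  ∃ e : A.V ≃ Fin (m+1) × Fin k,
    (∀ x y, A.adj x y ↔ rAdj (m+1) k (e x) (e y)) ∧
    (∀ i, e (A.lab (Sum.inl i)) = (⟨0, Nat.succ_pos m⟩, i)) ∧
    (∀ i, e (A.lab (Sum.inr i)) = (Fin.last m, i))

def pos {k : ℕ} : Fin k ⊕ Fin k → Fin 2 × Fin k
  | Sum.inl i => (0, i)
  | Sum.inr i => (1, i)

def unpos {k : ℕ} (x : Fin 2 × Fin k) : Fin k ⊕ Fin k :=
  if x.1.val = 0 then Sum.inl x.2 else Sum.inr x.2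

lemma unpos_pos {k : ℕ} (p : Fin k ⊕ Fin k) : unpos (pos p) = p := by
  cases p <;> rfl

lemma pos_unpos {k : ℕ} (x : Fin 2 × Fin k) : pos (unpos x) = x := by
  rcases x with ⟨r, c⟩
  fin_cases r <;> rfl

/-- the strip graph `V = C_k ∥ M_k`. -/
def strip (k : ℕ) : BLG k := (cycAtomic k (fun _ => 0)).parallel (matAtomic k (fun _ => 0))

lemma strip_lab_eq {k : ℕ} (p : Fin k ⊕ Fin k) :
    (strip k).lab p = Quot.mk _ (Sum.inr ((matAtomic k (fun _ => 0)).lab p)) :=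
  Quot.sound ⟨p, rfl, rfl⟩

lemma strip_surj {k : ℕ} (q : (strip k).V) : ∃ p, q = (strip k).lab p := by
  induction q using Quot.ind with
  | _ x =>
    rcases x with qc | qm
    · induction qc using Quot.ind with
      | _ p => exact ⟨p, rfl⟩
    · induction qm using Quot.ind with
      | _ p => exact ⟨p, (strip_lab_eq p).symm⟩

/-- forward map on strip vertices. -/
def stripF {k : ℕ} : (strip k).V → Fin 2 × Fin k :=
  Quot.lift
    (Sum.elim
      (Quot.lift pos (by rintro x y ⟨h, -⟩; simp at h))
      (Quot.lift pos (by rintro x y ⟨i, h, -⟩; simp at h)))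
    (by rintro x y ⟨p, rfl, rfl⟩; rfl)

lemma stripF_lab {k : ℕ} (p : Fin k ⊕ Fin k) : stripF ((strip k).lab p) = pos p := rfl

def stripE {k : ℕ} : (strip k).V ≃ Fin 2 × Fin k where
  toFun := stripF
  invFun := fun x => (strip k).lab (unpos x)
  left_inv := by
    intro q
    obtain ⟨p, rfl⟩ := strip_surj q
    simp only [stripF_lab, unpos_pos]
  right_inv := by
    intro x
    simp only [stripF_lab, pos_unpos]

-- appended part
lemma rAdj_symm {m k : ℕ} {a b : Fin m × Fin k} (h : rAdj m k a b) : rAdj m k b a := by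
  rw [rAdj_iff] at h ⊢; omega

lemma rot_inl_of_lt {k : ℕ} {i j : Fin k} (h : i.val + 1 = j.val) :
    rot k (Sum.inl i) = Sum.inl j := by
  simp only [rot]
  rw [dif_pos (h ▸ j.isLt)]
  exact congrArg _ (Fin.ext h)

lemma rot_inl_last {k : ℕ} {i : Fin k} (h : ¬ i.val + 1 < k) :
    rot k (Sum.inl i) = Sum.inr i := by
  simp only [rot]
  rw [dif_neg h]

lemma rot_inr_of_pos {k : ℕ} {i j : Fin k} (h : j.val + 1 = i.val) :
    rot k (Sum.inr i) = Sum.inr j := by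
  simp only [rot]
  rw [if_pos (by omega)]
  exact congrArg _ (Fin.ext (show i.val - 1 = j.val by omega))

lemma rot_inr_zero {k : ℕ} {i : Fin k} (h : i.val = 0) :
    rot k (Sum.inr i) = Sum.inl i := by
  simp only [rot]
  rw [if_neg (by omega)]

lemma rot_adj {k : ℕ} (p : Fin k ⊕ Fin k) : rAdj 2 k (pos p) (pos (rot k p)) := by
  rcases p with i | i
  · by_cases h : i.val + 1 < k
    · rw [rot_inl_of_lt (j := ⟨i.val + 1, h⟩) rfl]
      rw [rAdj_iff]; simp [pos]
    · rw [rot_inl_last h]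
      rw [rAdj_iff]; simp [pos]
  · by_cases h : 0 < i.val
    · rw [rot_inr_of_pos (j := ⟨i.val - 1, by omega⟩) (by simp; omega)]
      rw [rAdj_iff]; simp [pos]; omega
    · rw [rot_inr_zero (by omega)]
      rw [rAdj_iff]; simp [pos]

lemma vert_adj {k : ℕ} (i : Fin k) : rAdj 2 k (pos (Sum.inl i)) (pos (Sum.inr i)) := by
  rw [rAdj_iff]; simp [pos]

lemma strip_adj_of_cyc {k : ℕ} (p : Fin k ⊕ Fin k) :
    (strip k).adj ((strip k).lab p) ((strip k).lab (rot k p)) :=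
  ⟨Sum.inl ((cycAtomic k (fun _ => 0)).lab p),
   Sum.inl ((cycAtomic k (fun _ => 0)).lab (rot k p)), rfl, rfl,
   ⟨p, rfl, Or.inl ⟨rfl, rfl⟩⟩⟩

lemma strip_adj_of_cyc' {k : ℕ} (p : Fin k ⊕ Fin k) :
    (strip k).adj ((strip k).lab (rot k p)) ((strip k).lab p) :=
  ⟨Sum.inl ((cycAtomic k (fun _ => 0)).lab (rot k p)),
   Sum.inl ((cycAtomic k (fun _ => 0)).lab p), rfl, rfl,
   ⟨p, rfl, Or.inr ⟨rfl, rfl⟩⟩⟩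

lemma strip_adj_vert {k : ℕ} (i : Fin k) :
    (strip k).adj ((strip k).lab (Sum.inl i)) ((strip k).lab (Sum.inr i)) :=
  ⟨Sum.inr ((matAtomic k (fun _ => 0)).lab (Sum.inl i)),
   Sum.inr ((matAtomic k (fun _ => 0)).lab (Sum.inr i)),
   (strip_lab_eq _).symm, (strip_lab_eq _).symm,
   ⟨i, rfl, Or.inl ⟨rfl, rfl⟩⟩⟩

lemma strip_adj_vert' {k : ℕ} (i : Fin k) :
    (strip k).adj ((strip k).lab (Sum.inr i)) ((strip k).lab (Sum.inl i)) :=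
  ⟨Sum.inr ((matAtomic k (fun _ => 0)).lab (Sum.inr i)),
   Sum.inr ((matAtomic k (fun _ => 0)).lab (Sum.inl i)),
   (strip_lab_eq _).symm, (strip_lab_eq _).symm,
   ⟨i, rfl, Or.inr ⟨rfl, rfl⟩⟩⟩

lemma strip_adj {k : ℕ} (q1 q2 : (strip k).V) :
    (strip k).adj q1 q2 ↔ rAdj 2 k (stripF q1) (stripF q2) := by
  constructor
  · rintro ⟨x, y, rfl, rfl, hxy⟩
    rcases x with qc | qm <;> rcases y with qc' | qm'
    · obtain ⟨p, -, hor⟩ := hxy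
      rcases hor with ⟨h1, h2⟩ | ⟨h1, h2⟩ <;> subst h1 <;> subst h2
      · exact rot_adj p
      · exact rAdj_symm (rot_adj p)
    · exact hxy.elim
    · exact hxy.elim
    · obtain ⟨i, -, hor⟩ := hxy
      rcases hor with ⟨h1, h2⟩ | ⟨h1, h2⟩ <;> subst h1 <;> subst h2
      · exact vert_adj i
      · exact rAdj_symm (vert_adj i)
  · intro h
    obtain ⟨p, rfl⟩ := strip_surj q1
    obtain ⟨p', rfl⟩ := strip_surj q2
    rw [stripF_lab, stripF_lab] at h
    rcases p with i | i <;> rcases p' with j | j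
    · rw [rAdj_iff] at h
      simp [pos] at h
      rcases h with h | h
      · have := strip_adj_of_cyc (Sum.inl i)
        rwa [rot_inl_of_lt h] at this
      · have := strip_adj_of_cyc' (Sum.inl j)
        rwa [rot_inl_of_lt h] at this
    · rw [rAdj_iff] at h
      simp [pos] at h
      have hij : i = j := Fin.ext h
      subst hij
      exact strip_adj_vert i
    · rw [rAdj_iff] at h
      simp [pos] at h
      have hij : j = i := Fin.ext h.symm
      rw [hij]
      exact strip_adj_vert' i
    · rw [rAdj_iff] at h
      simp [pos] at h
      rcases h with h | h
      · have := strip_adj_of_cyc' (Sum.inr j)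
        rwa [rot_inr_of_pos h] at this
      · have := strip_adj_of_cyc (Sum.inr i)
        rwa [rot_inr_of_pos h] at this

lemma desc_strip (k : ℕ) : Desc (strip k) 1 :=
  ⟨stripE, strip_adj, fun _ => rfl, fun _ => rfl⟩

section StepDefs

variable {k m : ℕ} (A B : BLG k) (eA : A.V ≃ Fin (m+1) × Fin k) (eB : B.V ≃ Fin (1+1) × Fin k)

def serF0 : A.V ⊕ B.V → Fin (m+1+1) × Fin k
  | Sum.inl a => (⟨(eA a).1.val, by have := (eA a).1.isLt; omega⟩, (eA a).2)
  | Sum.inr b => (⟨m + (eB b).1.val, by have := (eB b).1.isLt; omega⟩, (eB b).2)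

def serG : Fin (m+1+1) × Fin k → (A.series B).V := fun x =>
  if h : x.1.val < m + 1 then Quot.mk _ (Sum.inl (eA.symm (⟨x.1.val, h⟩, x.2)))
  else Quot.mk _ (Sum.inr (eB.symm (⟨x.1.val - m, by have := x.1.isLt; omega⟩, x.2)))

end StepDefs

lemma desc_series {k m : ℕ} {A B : BLG k} (hA : Desc A m) (hB : Desc B 1) :
    Desc (A.series B) (m + 1) := by
  obtain ⟨eA, hAadj, hAin, hAout⟩ := hA
  obtain ⟨eB, hBadj, hBin, hBout⟩ := hB
  -- basic helpers
  have hAsymm : ∀ a b, A.adj a b → A.adj b a := fun a b h =>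
    (hAadj b a).mpr (rAdj_symm ((hAadj a b).mp h))
  have hBsymm : ∀ a b, B.adj a b → B.adj b a := fun a b h =>
    (hBadj b a).mpr (rAdj_symm ((hBadj a b).mp h))
  have hSsymm : ∀ q1 q2, (A.series B).adj q1 q2 → (A.series B).adj q2 q1 := by
    rintro _ _ ⟨x, y, rfl, rfl, hxy⟩
    refine ⟨y, x, rfl, rfl, ?_⟩
    rcases x with a | v <;> rcases y with b | w <;> simp only [sumAdj] at hxy ⊢
    · exact hAsymm _ _ hxy
    · exact hBsymm _ _ hxy
  have mkEq : ∀ i : Fin k, Quot.mk (seriesRel A B) (Sum.inl (A.lab (Sum.inr i)))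
      = Quot.mk (seriesRel A B) (Sum.inr (B.lab (Sum.inl i))) :=
    fun i => Quot.sound ⟨i, rfl, rfl⟩
  have hBv : ∀ v : B.V, (eB v).1.val = 0 → v = B.lab (Sum.inl (eB v).2) := by
    intro v hv
    apply eB.injective
    rw [hBin]
    exact Prod.ext (Fin.ext hv) rfl
  have hAa : ∀ a : A.V, (eA a).1.val = m → a = A.lab (Sum.inr (eA a).2) := by
    intro a ha
    apply eA.injective
    rw [hAout]
    exact Prod.ext (Fin.ext ha) rfl
  -- the respectfulness of serF0
  have hresp : ∀ x y, seriesRel A B x y → serF0 A B eA eB x = serF0 A B eA eB y := by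
    rintro _ _ ⟨i, rfl, rfl⟩
    have h1 : (eA (A.lab (Sum.inr i))).1.val = m := by rw [hAout]; rfl
    have h2 : (eA (A.lab (Sum.inr i))).2 = i := by rw [hAout]
    have h3 : (eB (B.lab (Sum.inl i))).1.val = 0 := by rw [hBin]
    have h4 : (eB (B.lab (Sum.inl i))).2 = i := by rw [hBin]
    simp only [serF0]
    exact Prod.ext (Fin.ext (by simp [h1, h3])) (by simp [h2, h4])
  -- the equivalence
  refine ⟨⟨Quot.lift (serF0 A B eA eB) hresp, serG A B eA eB, ?_, ?_⟩, ?_, ?_, ?_⟩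
  · -- left inverse
    intro q
    induction q using Quot.ind with
    | _ x =>
      rcases x with a | v
      · show serG A B eA eB (serF0 A B eA eB (Sum.inl a)) = _
        unfold serG serF0
        dsimp only [BLG.series]
        rw [dif_pos (show (eA a).1.val < m + 1 from (eA a).1.isLt)]
        have h2 : ((⟨(eA a).1.val, (eA a).1.isLt⟩ : Fin (m+1)), (eA a).2) = eA a :=
          Prod.ext (Fin.ext rfl) rfl
        rw [h2, Equiv.symm_apply_apply]
      · show serG A B eA eB (serF0 A B eA eB (Sum.inr v)) = _
        unfold serG serF0
        dsimp only [BLG.series]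
        by_cases hv : (eB v).1.val = 0
        · rw [dif_pos (show m + (eB v).1.val < m + 1 by omega)]
          have h2 : ((⟨m + (eB v).1.val, by omega⟩ : Fin (m+1)), (eB v).2)
              = (Fin.last m, (eB v).2) := Prod.ext (Fin.ext (by simp [Fin.last, hv])) rfl
          rw [h2]
          have h3 : eA.symm (Fin.last m, (eB v).2) = A.lab (Sum.inr (eB v).2) := by
            apply eA.injective; rw [Equiv.apply_symm_apply, hAout]
          rw [h3, mkEq, ← hBv v hv]
        · rw [dif_neg (show ¬ m + (eB v).1.val < m + 1 by
            have := (eB v).1.isLt; omega)]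
          have h2 : ((⟨m + (eB v).1.val - m, by have := (eB v).1.isLt; omega⟩ : Fin (1+1)),
              (eB v).2) = eB v :=
            Prod.ext (Fin.ext (show m + (eB v).1.val - m = (eB v).1.val by omega)) rfl
          rw [h2, Equiv.symm_apply_apply]
  · -- right inverse
    intro x
    unfold serG
    dsimp only [BLG.series]
    by_cases h : x.1.val < m + 1
    · rw [dif_pos h]
      show serF0 A B eA eB (Sum.inl (eA.symm (⟨x.1.val, h⟩, x.2))) = x
      simp only [serF0, Equiv.apply_symm_apply]
    · rw [dif_neg h]
      show serF0 A B eA eB (Sum.inr (eB.symm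
        (⟨x.1.val - m, by have := x.1.isLt; omega⟩, x.2))) = x
      simp only [serF0, Equiv.apply_symm_apply]
      refine Prod.ext (Fin.ext ?_) rfl
      show m + (x.1.val - m) = x.1.val
      omega
  · -- adjacency
    intro q1 q2
    induction q1 using Quot.ind with
    | _ x =>
    induction q2 using Quot.ind with
    | _ y =>
    show (A.series B).adj _ _ ↔ rAdj _ _ (serF0 A B eA eB x) (serF0 A B eA eB y)
    -- key one-sided constructor for the mixed case
    have key : ∀ (a : A.V) (v : B.V),
        rAdj (m+1+1) k (serF0 A B eA eB (Sum.inl a)) (serF0 A B eA eB (Sum.inr v)) →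
        (A.series B).adj (Quot.mk _ (Sum.inl a)) (Quot.mk _ (Sum.inr v)) := by
      intro a v h
      rw [rAdj_iff] at h
      replace h : ((eA a).1.val = m + (eB v).1.val ∧
            ((eA a).2.val + 1 = (eB v).2.val ∨ (eB v).2.val + 1 = (eA a).2.val)) ∨
          ((eA a).2.val = (eB v).2.val ∧
            ((eA a).1.val + 1 = m + (eB v).1.val ∨
              m + (eB v).1.val + 1 = (eA a).1.val)) := h
      have hra := (eA a).1.isLt
      have hrv := (eB v).1.isLt
      rcases h with ⟨hrow, hcol⟩ | ⟨hcol, hrow⟩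
      · -- same row: row of a is m, row of v is 0
        have h1 : (eA a).1.val = m := by omega
        have h2 : (eB v).1.val = 0 := by omega
        refine ⟨Sum.inl a, Sum.inl (A.lab (Sum.inr (eB v).2)), rfl, ?_, ?_⟩
        · rw [mkEq, ← hBv v h2]
        · show A.adj a (A.lab (Sum.inr (eB v).2))
          rw [hAadj, rAdj_iff, hAout]
          simp only [Fin.val_last]
          omega
      · -- same column, rows differ by one
        rcases hrow with hrow | hrow
        · by_cases h2 : (eB v).1.val = 0
          · -- row of a is m - 1, v is at row m
            refine ⟨Sum.inl a, Sum.inl (A.lab (Sum.inr (eB v).2)), rfl, ?_, ?_⟩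
            · rw [mkEq, ← hBv v h2]
            · show A.adj a (A.lab (Sum.inr (eB v).2))
              rw [hAadj, rAdj_iff, hAout]
              simp only [Fin.val_last]
              omega
          · -- row of a is m, row of v is 1
            have h1 : (eA a).1.val = m := by omega
            refine ⟨Sum.inr (B.lab (Sum.inl (eA a).2)), Sum.inr v, ?_, rfl, ?_⟩
            · rw [← mkEq, ← hAa a h1]
            · show B.adj (B.lab (Sum.inl (eA a).2)) v
              rw [hBadj, rAdj_iff, hBin]
              simp only []
              omega
        · omega
    constructor
    · rintro ⟨x', y', hx', hy', hxy⟩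
      have hfx : serF0 A B eA eB x = serF0 A B eA eB x' := by
        rw [show serF0 A B eA eB x = Quot.lift (serF0 A B eA eB) hresp (Quot.mk _ x) from rfl,
          ← hx']
      have hfy : serF0 A B eA eB y = serF0 A B eA eB y' := by
        rw [show serF0 A B eA eB y = Quot.lift (serF0 A B eA eB) hresp (Quot.mk _ y) from rfl,
          ← hy']
      rw [hfx, hfy]
      rcases x' with a | v <;> rcases y' with b | w <;> simp only [sumAdj] at hxy
      · have hthis := (hAadj a b).mp hxy
        rw [rAdj_iff] at hthis ⊢
        exact hthis
      · have hthis := (hBadj v w).mp hxy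
        rw [rAdj_iff] at hthis ⊢
        show (m + (eB v).1.val = m + (eB w).1.val ∧
            ((eB v).2.val + 1 = (eB w).2.val ∨ (eB w).2.val + 1 = (eB v).2.val)) ∨
          ((eB v).2.val = (eB w).2.val ∧
            (m + (eB v).1.val + 1 = m + (eB w).1.val ∨
              m + (eB w).1.val + 1 = m + (eB v).1.val))
        omega
    · intro h
      rcases x with a | v <;> rcases y with b | w
      · refine ⟨Sum.inl a, Sum.inl b, rfl, rfl, ?_⟩
        show A.adj a b
        rw [hAadj, rAdj_iff]
        rw [rAdj_iff] at h
        replace h : ((eA a).1.val = (eA b).1.val ∧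
            ((eA a).2.val + 1 = (eA b).2.val ∨ (eA b).2.val + 1 = (eA a).2.val)) ∨
          ((eA a).2.val = (eA b).2.val ∧
            ((eA a).1.val + 1 = (eA b).1.val ∨ (eA b).1.val + 1 = (eA a).1.val)) := h
        omega
      · exact key a w h
      · exact hSsymm _ _ (key b v (rAdj_symm h))
      · refine ⟨Sum.inr v, Sum.inr w, rfl, rfl, ?_⟩
        show B.adj v w
        rw [hBadj, rAdj_iff]
        rw [rAdj_iff] at h
        replace h : (m + (eB v).1.val = m + (eB w).1.val ∧
            ((eB v).2.val + 1 = (eB w).2.val ∨ (eB w).2.val + 1 = (eB v).2.val)) ∨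
          ((eB v).2.val = (eB w).2.val ∧
            (m + (eB v).1.val + 1 = m + (eB w).1.val ∨
              m + (eB w).1.val + 1 = m + (eB v).1.val)) := h
        omega
  · -- in-labels
    intro i
    show serF0 A B eA eB (Sum.inl (A.lab (Sum.inl i))) = _
    have h1 : (eA (A.lab (Sum.inl i))).1.val = 0 := by rw [hAin]
    have h2 : (eA (A.lab (Sum.inl i))).2 = i := by rw [hAin]
    simp only [serF0]
    exact Prod.ext (Fin.ext (by simpa using h1)) (by simpa using h2)
  · -- out-labels
    intro i
    show serF0 A B eA eB (Sum.inr (B.lab (Sum.inr i))) = _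
    have h1 : (eB (B.lab (Sum.inr i))).1.val = 1 := by rw [hBout]; rfl
    have h2 : (eB (B.lab (Sum.inr i))).2 = i := by rw [hBout]
    simp only [serF0]
    exact Prod.ext (Fin.ext (by simp [h1, Fin.last])) (by simpa using h2)

lemma exists_desc (k : ℕ) (n : ℕ) : ∃ A : BLG k, InP k A ∧ Desc A (n+1) := by
  induction n with
  | zero => exact ⟨strip k, InP.par _ (InP.mat _), desc_strip k⟩
  | succ n ih =>
    obtain ⟨A, hP, hD⟩ := ih
    exact ⟨A.series (strip k), InP.series hP (InP.par _ (InP.mat _)),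
      desc_series hD (desc_strip k)⟩

lemma rAdj_cast {m k : ℕ} (h : m = k) (a b : Fin m × Fin k) :
    gridAdj k (finCongr h a.1, a.2) (finCongr h b.1, b.2) ↔ rAdj m k a b := by
  rw [rAdj_iff]
  simp [gridAdj, Fin.ext_iff]

end StmtAux

/-- for every `k`, the `k × k` grid graph is the underlying unlabelled
graph of an element of the class `𝒫ₖ`. -/
theorem stmt13 (k : ℕ) (hk : 1 ≤ k) :
    ∃ A : BLG k, BLG.InP k A ∧
      ∃ e : A.V ≃ (Fin k × Fin k), ∀ x y : A.V, A.adj x y ↔ gridAdj k (e x) (e y) := by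
  rcases Nat.lt_or_ge k 2 with hk2 | hk2
  · -- k = 1
    have hk1 : k = 1 := by omega
    subst hk1
    refine ⟨BLG.matAtomic 1 (fun _ => 1), BLG.InP.mat _,
      ⟨⟨fun _ => (0, 0), fun _ => Quot.mk _ (Sum.inl (0 : Fin 1)), ?_, ?_⟩, ?_⟩⟩
    · intro q
      induction q using Quot.ind with
      | _ p =>
        rcases p with i | i
        · exact congrArg _ (congrArg _ (Subsingleton.elim _ _))
        · exact Quot.sound ⟨0, rfl, rfl, congrArg _ (Subsingleton.elim _ _)⟩
    · intro x
      exact Subsingleton.elim _ _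
    · intro x y
      constructor
      · rintro ⟨i, hi, -⟩
        simp at hi
      · intro h
        rcases h with ⟨-, h | h⟩ | ⟨-, h | h⟩ <;> simp at h
  · -- k ≥ 2
    obtain ⟨A, hP, eD⟩ := StmtAux.exists_desc k (k - 2)
    obtain ⟨e, hadj, -, -⟩ := eD
    have hm : k - 2 + 1 + 1 = k := by omega
    refine ⟨A, hP, e.trans (Equiv.prodCongr (finCongr hm) (Equiv.refl _)), ?_⟩
    intro x y
    rw [hadj x y]
    exact (StmtAux.rAdj_cast hm (e x) (e y)).symm
end
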